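/- arXiv:1606.07731 — 8 statements merged into one kernel-verified Lean document; each statement's English description precedes it below -/
import Mathlib

section
/- Let s ∈ ℂ with Re s > 0, and let z : ℝ → ℂ be measurable with ∫_0^∞ |z(t)|² dt < ∞ and z = 0 almost everywhere on (−∞,0). Assume that for every h ≥ 0 one has z(t+h) = e^{−sh}·z(t) for almost every t ≥ 0. Then there exists a unique a ∈ ℂ such that z(t) = a·e^{−st} for almost every t ≥ 0. -/
/-!
Multiplying by `e^{st}` turns the hypothesis into shift invariance of `w t = e^{st} z t` on
`[0, ∞)`. By Fubini, for a.e. `t ≥ 0` the function `w` equals `w t` a.e. on `[t, ∞)`; any two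
such tails overlap in a set of positive measure, so `w` is a.e. constant on `[0, ∞)`.
-/

open MeasureTheory

theorem Real.exists_ge_of_ae {P : ℝ → Prop} (h : ∀ᵐ u, P u) (M : ℝ) : ∃ u, M ≤ u ∧ P u := by
  have : (ae (volume.restrict (Set.Ici M))).NeBot := ae_restrict_neBot.mpr (by simp)
  exact ((ae_restrict_mem measurableSet_Ici).and (ae_restrict_of_ae h)).exists

section ShiftInvariant

variable {E : Type*} [MeasurableSpace E] [MeasurableEq E] {w : ℝ → E}

theorem ae_ae_eq_of_shift_invariant (hw : Measurable w)
    (hshift : ∀ h : ℝ, 0 ≤ h → ∀ᵐ t, 0 ≤ t → w (t + h) = w t) :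
    ∀ᵐ t, 0 ≤ t → ∀ᵐ u, t ≤ u → w u = w t := by
  have hmeas : MeasurableSet {p : ℝ × ℝ | 0 ≤ p.1 → 0 ≤ p.2 → w (p.2 + p.1) = w p.2} :=
    (measurableSet_le measurable_const measurable_fst).himp <|
      (measurableSet_le measurable_const measurable_snd).himp <|
        measurableSet_eq_fun (hw.comp (measurable_snd.add measurable_fst)) (hw.comp measurable_snd)
  have hswap : ∀ᵐ t, ∀ᵐ h, 0 ≤ h → 0 ≤ t → w (t + h) = w t :=
    (Measure.ae_ae_comm hmeas).mp <| ae_of_all _ fun h =>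
      (em (0 ≤ h)).elim (fun hh => (hshift h hh).mono fun _ ht _ => ht)
        fun hh => ae_of_all _ fun _ hh' => absurd hh' hh
  filter_upwards [hswap] with t ht ht0
  filter_upwards [(measurePreserving_sub_right volume t).quasiMeasurePreserving.ae ht]
    with u hu htu
  simpa using hu (sub_nonneg.mpr htu) ht0

theorem exists_ae_eq_const_of_shift_invariant (hw : Measurable w)
    (hshift : ∀ h : ℝ, 0 ≤ h → ∀ᵐ t, 0 ≤ t → w (t + h) = w t) :
    ∃ c, ∀ᵐ t, 0 ≤ t → w t = c := by
  have htail := ae_ae_eq_of_shift_invariant hw hshift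
  obtain ⟨t₀, ht₀, htail₀⟩ := Real.exists_ge_of_ae htail 0
  refine ⟨w t₀, ?_⟩
  filter_upwards [htail] with t htail_t ht
  obtain ⟨u, hu, hut, hut₀⟩ := Real.exists_ge_of_ae ((htail_t ht).and (htail₀ ht₀)) (max t t₀)
  rw [← hut (le_of_max_le_left hu), hut₀ (le_of_max_le_right hu)]

end ShiftInvariant

theorem statement6_general (s : ℂ) (z : ℝ → ℂ) (hz : Measurable z)
    (hshift : ∀ h : ℝ, 0 ≤ h →
      ∀ᵐ t ∂volume, 0 ≤ t → z (t + h) = Complex.exp (-(s * (h : ℂ))) * z t) :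
    ∃! a : ℂ, ∀ᵐ t ∂volume, 0 ≤ t → z t = a * Complex.exp (-(s * (t : ℂ))) := by
  have hexp (t : ℝ) : Complex.exp (s * t) * Complex.exp (-(s * t)) = 1 := by
    rw [← Complex.exp_add, add_neg_cancel, Complex.exp_zero]
  have hz_iff (a : ℂ) (t : ℝ) :
      z t = a * Complex.exp (-(s * t)) ↔ Complex.exp (s * t) * z t = a := by
    rw [Complex.exp_neg, eq_mul_inv_iff_mul_eq₀ (Complex.exp_ne_zero _), mul_comm]
  have hw : Measurable fun t : ℝ => Complex.exp (s * t) * z t := by fun_prop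
  obtain ⟨a, ha⟩ := exists_ae_eq_const_of_shift_invariant hw fun h hh => by
    filter_upwards [hshift h hh] with t ht ht0
    rw [ht ht0, Complex.ofReal_add, mul_add, Complex.exp_add]
    linear_combination Complex.exp (s * t) * z t * hexp h
  refine ⟨a, ?_, fun b hb => ?_⟩
  · filter_upwards [ha] with t ht ht0
    exact (hz_iff a t).mpr (ht ht0)
  · obtain ⟨t, ht0, hbt, hat⟩ := Real.exists_ge_of_ae (hb.and ha) 0
    exact ((hz_iff b t).mp (hbt ht0)).symm.trans (hat ht0)

/-- Let `Re s > 0` and let `z : ℝ → ℂ` be measurable, square integrable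
on `(0,∞)`, vanishing a.e. on `(-∞,0)`, and such that for every `h ≥ 0`,
`z(t+h) = e^{-sh} z(t)` for a.e. `t ≥ 0`.  Then there is a unique `a ∈ ℂ` with
`z(t) = a e^{-st}` for a.e. `t ≥ 0`. -/
theorem statement6 (s : ℂ) (hs : 0 < s.re) (z : ℝ → ℂ) (hz : Measurable z)
    (hz2 : IntegrableOn (fun t => ‖z t‖ ^ 2) (Set.Ioi (0 : ℝ)) volume)
    (hz0 : ∀ᵐ t ∂volume, t < 0 → z t = 0)
    (hshift : ∀ h : ℝ, 0 ≤ h →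
      ∀ᵐ t ∂volume, 0 ≤ t → z (t + h) = Complex.exp (-(s * (h : ℂ))) * z t) :
    ∃! a : ℂ, ∀ᵐ t ∂volume, 0 ≤ t → z t = a * Complex.exp (-(s * (t : ℂ))) :=
  statement6_general s z hz hshift
end

section
/- Let ν, μ ∈ ℝ with ν ≤ μ, and let X, Y be complex Hilbert spaces. Let S_ν : L²_ν(ℝ;X) → L²_ν(ℝ;Y) and S_μ : L²_μ(ℝ;X) → L²_μ(ℝ;Y) be bounded linear operators, both causal. Let 𝓓 be a set of strongly measurable functions f : ℝ → X each belonging to both L²_ν(ℝ;X) and L²_μ(ℝ;X), such that the set of equivalence classes of elements of 𝓓 is dense in L²_μ(ℝ;X), and such that S_ν f = S_μ f almost everywhere for every f ∈ 𝓓. Then S_ν f = S_μ f almost everywhere for every strongly measurable f : ℝ → X belonging to both L²_ν(ℝ;X) and L²_μ(ℝ;X). -/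
/-!
For `ν ≤ μ` and `s ≤ t` one has `e^{-2νs} ≤ e^{2(μ-ν)t} e^{-2μs}`, so truncation to `(-∞, t]` is a
bounded map `L²_μ → L²_ν`. Since `S_ν` is causal, `g ↦ 1_{(-∞,t]} S_ν (1_{(-∞,t]} g)` and
`g ↦ 1_{(-∞,t]} S_μ g` are then two continuous maps `L²_μ → L²_ν`; they agree on the dense set
`𝓓`, hence everywhere. Letting `t → ∞` gives `S_ν u = S_μ v` a.e.
-/

open MeasureTheory

noncomputable section

/-- The exponentially weighted measure `e^{-2νt} dt` on `ℝ`, so that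
`Lp X 2 (wmeas ν)` is the space `L²_ν(ℝ;X)`. -/
def wmeas (ν : ℝ) : Measure ℝ :=
  volume.withDensity fun t => ENNReal.ofReal (Real.exp (-(2 * ν * t)))

open Set Filter
open scoped ENNReal

lemma ae_wmeas (ν : ℝ) : ae (wmeas ν) = ae volume := by
  refine le_antisymm (withDensity_absolutelyContinuous _ _).ae_le ?_
  refine (withDensity_absolutelyContinuous' (by fun_prop) ?_).ae_le
  exact .of_forall fun t => by positivity

lemma wmeas_absolutelyContinuous (ν μ : ℝ) : wmeas ν ≪ wmeas μ :=
  Measure.ae_le_iff_absolutelyContinuous.mp (by rw [ae_wmeas, ae_wmeas])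

lemma wmeas_restrict_Iic_le_smul {ν μ : ℝ} (hνμ : ν ≤ μ) (t : ℝ) :
    (wmeas ν).restrict (Iic t)
      ≤ ENNReal.ofReal (Real.exp (2 * (μ - ν) * t)) • (wmeas μ).restrict (Iic t) := by
  rw [wmeas, wmeas, restrict_withDensity measurableSet_Iic, restrict_withDensity measurableSet_Iic,
    ← withDensity_smul' _ _ ENNReal.ofReal_ne_top]
  refine withDensity_mono ?_
  filter_upwards [ae_restrict_mem measurableSet_Iic] with s (hs : s ≤ t)
  rw [Pi.smul_apply, smul_eq_mul, ← ENNReal.ofReal_mul (Real.exp_pos _).le, ← Real.exp_add]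
  gcongr
  nlinarith

section Truncation

variable {E : Type*} [NormedAddCommGroup E] {p : ℝ≥0∞} {ν μ : ℝ}

lemma eLpNorm_indicator_Iic_le (hνμ : ν ≤ μ) (t : ℝ) (f : ℝ → E) :
    eLpNorm ((Iic t).indicator f) p (wmeas ν)
      ≤ ENNReal.ofReal (Real.exp (2 * (μ - ν) * t)) ^ (1 / p).toReal * eLpNorm f p (wmeas μ) := by
  rw [eLpNorm_indicator_eq_eLpNorm_restrict measurableSet_Iic]
  grw [eLpNorm_le_of_measure_le_smul (wmeas_restrict_Iic_le_smul hνμ t),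
    eLpNorm_mono_measure f Measure.restrict_le_self]
  rw [smul_eq_mul]

lemma memLp_indicator_Iic_wmeas (hνμ : ν ≤ μ) (t : ℝ) {f : ℝ → E} (hf : MemLp f p (wmeas μ)) :
    MemLp ((Iic t).indicator f) p (wmeas ν) := by
  refine ⟨?_, (eLpNorm_indicator_Iic_le hνμ t f).trans_lt ?_⟩
  · exact (hf.1.mono_ac (wmeas_absolutelyContinuous ν μ)).indicator measurableSet_Iic
  · exact ENNReal.mul_lt_top
      (ENNReal.rpow_lt_top_of_nonneg (by positivity) ENNReal.ofReal_ne_top) hf.2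

def truncIic (hνμ : ν ≤ μ) (t : ℝ) (f : Lp E p (wmeas μ)) : Lp E p (wmeas ν) :=
  (memLp_indicator_Iic_wmeas hνμ t (Lp.memLp f)).toLp _

lemma coeFn_truncIic (hνμ : ν ≤ μ) (t : ℝ) (f : Lp E p (wmeas μ)) :
    (truncIic hνμ t f : ℝ → E) =ᵐ[volume] (Iic t).indicator f := by
  rw [← ae_wmeas ν]
  exact MemLp.coeFn_toLp _

lemma truncIic_ae_eq_Iic (hνμ : ν ≤ μ) (t : ℝ) (f : Lp E p (wmeas μ)) :
    ∀ᵐ s, s ≤ t → truncIic hνμ t f s = f s := by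
  filter_upwards [coeFn_truncIic hνμ t f] with s hs hst
  rw [hs, indicator_of_mem (mem_Iic.mpr hst)]

lemma truncIic_eq_truncIic_iff {μ' : ℝ} (hνμ : ν ≤ μ) (hνμ' : ν ≤ μ') (t : ℝ)
    (f : Lp E p (wmeas μ)) (g : Lp E p (wmeas μ')) :
    truncIic hνμ t f = truncIic hνμ' t g ↔ ∀ᵐ s, s ≤ t → f s = g s := by
  rw [Lp.ext_iff, EventuallyEq, ae_wmeas]
  constructor
  · intro h
    filter_upwards [h, coeFn_truncIic hνμ t f, coeFn_truncIic hνμ' t g] with s h hf hg hst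
    simpa [hf, hg, hst] using h
  · intro h
    filter_upwards [h, coeFn_truncIic hνμ t f, coeFn_truncIic hνμ' t g] with s h hf hg
    by_cases hst : s ≤ t <;> simp [hf, hg, hst, h]

lemma lipschitzWith_truncIic [Fact (1 ≤ p)] (hνμ : ν ≤ μ) (t : ℝ) :
    LipschitzWith (ENNReal.ofReal (Real.exp (2 * (μ - ν) * t)) ^ (1 / p).toReal).toNNReal
      (truncIic (E := E) (p := p) hνμ t) := by
  intro f g
  rw [Lp.edist_def, Lp.edist_def, ENNReal.coe_toNNReal
    (ENNReal.rpow_ne_top_of_nonneg (by positivity) ENNReal.ofReal_ne_top)]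
  refine le_of_eq_of_le (eLpNorm_congr_ae ?_) (eLpNorm_indicator_Iic_le hνμ t _)
  rw [ae_wmeas]
  filter_upwards [coeFn_truncIic hνμ t f, coeFn_truncIic hνμ t g] with s hf hg
  rw [Pi.sub_apply, hf, hg, indicator_sub', Pi.sub_apply]

end Truncation

section Causality

variable {X Y : Type*} [NormedAddCommGroup X] [NormedAddCommGroup Y] {p : ℝ≥0∞} {ν : ℝ}

def IsCausal (S : Lp X p (wmeas ν) → Lp Y p (wmeas ν)) : Prop :=
  ∀ t : ℝ, ∀ f : Lp X p (wmeas ν),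
    (∀ᵐ s ∂volume, s ≤ t → f s = 0) → ∀ᵐ s ∂volume, s ≤ t → S f s = 0

lemma coeFn_sub_wmeas (f g : Lp X p (wmeas ν)) : ⇑(f - g) =ᵐ[volume] ⇑f - ⇑g := by
  rw [← ae_wmeas ν]
  exact Lp.coeFn_sub f g

lemma IsCausal.ae_eq_Iic {F : Type*} [FunLike F (Lp X p (wmeas ν)) (Lp Y p (wmeas ν))]
    [AddMonoidHomClass F (Lp X p (wmeas ν)) (Lp Y p (wmeas ν))] {S : F} (hS : IsCausal S)
    {t : ℝ} {f g : Lp X p (wmeas ν)} (hfg : ∀ᵐ s, s ≤ t → f s = g s) :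
    ∀ᵐ s, s ≤ t → S f s = S g s := by
  have hsub : ∀ᵐ s, s ≤ t → (f - g) s = 0 := by
    filter_upwards [hfg, coeFn_sub_wmeas f g] with s hs hsub hst
    rw [hsub, Pi.sub_apply, hs hst, sub_self]
  filter_upwards [hS t _ hsub, coeFn_sub_wmeas (S f) (S g)] with s hs hsub hst
  rw [← sub_eq_zero, ← Pi.sub_apply, ← hsub, ← map_sub, hs hst]

end Causality

lemma ae_of_forall_ae_Iic {m : Measure ℝ} {P : ℝ → Prop} (h : ∀ t : ℝ, ∀ᵐ s ∂m, s ≤ t → P s) :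
    ∀ᵐ s ∂m, P s := by
  filter_upwards [ae_all_iff.mpr fun n : ℕ => h n] with s hs
  obtain ⟨n, hn⟩ := exists_nat_ge s
  exact hs n hn

section Uniqueness

variable {X Y : Type*} [NormedAddCommGroup X] [NormedAddCommGroup Y] {p : ℝ≥0∞} [Fact (1 ≤ p)]
  {ν μ : ℝ} {F : Type*} [FunLike F (Lp X p (wmeas ν)) (Lp Y p (wmeas ν))]
  [AddMonoidHomClass F (Lp X p (wmeas ν)) (Lp Y p (wmeas ν))]
  [ContinuousMapClass F (Lp X p (wmeas ν)) (Lp Y p (wmeas ν))]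
  {Sν : F} {Sμ : Lp X p (wmeas μ) → Lp Y p (wmeas μ)} {D : Set (Lp X p (wmeas μ))}

lemma truncIic_comp_eq_of_dense (hνμ : ν ≤ μ) (hcν : IsCausal Sν) (hSμ : Continuous Sμ)
    (hD : Dense D)
    (hagree : ∀ g ∈ D, ∃ u : Lp X p (wmeas ν), ⇑u =ᵐ[volume] ⇑g ∧ ⇑(Sν u) =ᵐ[volume] ⇑(Sμ g))
    (t : ℝ) (g : Lp X p (wmeas μ)) :
    truncIic le_rfl t (Sν (truncIic hνμ t g)) = truncIic hνμ t (Sμ g) := by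
  suffices (fun g => truncIic le_rfl t (Sν (truncIic hνμ t g)))
      = fun g => truncIic hνμ t (Sμ g) from congrFun this g
  refine Continuous.ext_on hD ?_ ?_ ?_
  · exact (lipschitzWith_truncIic le_rfl t).continuous.comp
      ((map_continuous Sν).comp (lipschitzWith_truncIic hνμ t).continuous)
  · exact (lipschitzWith_truncIic hνμ t).continuous.comp hSμ
  rintro g hg
  obtain ⟨u, hug, hu⟩ := hagree g hg
  have htrunc : ∀ᵐ s, s ≤ t → truncIic hνμ t g s = u s := by
    filter_upwards [truncIic_ae_eq_Iic hνμ t g, hug] with s hs hug hst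
    rw [hs hst, hug]
  rw [truncIic_eq_truncIic_iff]
  filter_upwards [hcν.ae_eq_Iic htrunc, hu] with s hs hu hst
  rw [hs hst, hu]

lemma IsCausal.ae_eq_of_dense (hνμ : ν ≤ μ) (hcν : IsCausal Sν) (hSμ : Continuous Sμ)
    (hD : Dense D)
    (hagree : ∀ g ∈ D, ∃ u : Lp X p (wmeas ν), ⇑u =ᵐ[volume] ⇑g ∧ ⇑(Sν u) =ᵐ[volume] ⇑(Sμ g))
    {u : Lp X p (wmeas ν)} {v : Lp X p (wmeas μ)} (huv : ⇑u =ᵐ[volume] ⇑v) :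
    ⇑(Sν u) =ᵐ[volume] ⇑(Sμ v) := by
  refine ae_of_forall_ae_Iic fun t => ?_
  have hu : ∀ᵐ s, s ≤ t → u s = truncIic hνμ t v s := by
    filter_upwards [truncIic_ae_eq_Iic hνμ t v, huv] with s hs huv hst
    rw [hs hst, huv]
  have hv := (truncIic_eq_truncIic_iff _ _ _ _ _).mp
    (truncIic_comp_eq_of_dense hνμ hcν hSμ hD hagree t v)
  filter_upwards [hcν.ae_eq_Iic hu, hv] with s hu hv hst
  rw [hu hst, hv hst]

end Uniqueness

theorem statement8_general {X Y : Type*}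
    [NormedAddCommGroup X] [InnerProductSpace ℂ X]
    [NormedAddCommGroup Y] [InnerProductSpace ℂ Y]
    (ν μ : ℝ) (hνμ : ν ≤ μ)
    (Sν : Lp X 2 (wmeas ν) →L[ℂ] Lp Y 2 (wmeas ν))
    (Sμ : Lp X 2 (wmeas μ) →L[ℂ] Lp Y 2 (wmeas μ))
    (hcν : ∀ t : ℝ, ∀ f : Lp X 2 (wmeas ν),
      (∀ᵐ s ∂volume, s ≤ t → f s = 0) → (∀ᵐ s ∂volume, s ≤ t → Sν f s = 0))
    (𝓓 : Set (ℝ → X))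
    (h𝓓 : ∀ f ∈ 𝓓, MemLp f 2 (wmeas ν) ∧ MemLp f 2 (wmeas μ))
    (hdense : Dense {g : Lp X 2 (wmeas μ) | ∃ f ∈ 𝓓, (g : ℝ → X) =ᵐ[volume] f})
    (hagree : ∀ f ∈ 𝓓, ∀ (u : Lp X 2 (wmeas ν)) (v : Lp X 2 (wmeas μ)),
      (u : ℝ → X) =ᵐ[volume] f → (v : ℝ → X) =ᵐ[volume] f →
      (Sν u : ℝ → Y) =ᵐ[volume] (Sμ v : ℝ → Y)) :
    ∀ (u : Lp X 2 (wmeas ν)) (v : Lp X 2 (wmeas μ)),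
      (u : ℝ → X) =ᵐ[volume] (v : ℝ → X) →
      (Sν u : ℝ → Y) =ᵐ[volume] (Sμ v : ℝ → Y) := by
  refine fun u v huv => IsCausal.ae_eq_of_dense hνμ hcν Sμ.continuous hdense ?_ huv
  rintro g ⟨f, hf, hgf⟩
  have hfu : ⇑((h𝓓 f hf).1.toLp f) =ᵐ[volume] f := by
    rw [← ae_wmeas ν]
    exact MemLp.coeFn_toLp _
  exact ⟨_, hfu.trans hgf.symm, hagree f hf _ g hfu hgf⟩

/-- Let `ν ≤ μ`, and let `S_ν`, `S_μ` be bounded causal operators on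
`L²_ν` resp. `L²_μ`.  If they agree on a family `𝓓` of functions lying in both spaces
whose classes are dense in `L²_μ(ℝ;X)`, then they agree on the whole intersection
`L²_ν(ℝ;X) ∩ L²_μ(ℝ;X)`. -/
theorem statement8 {X Y : Type*}
    [NormedAddCommGroup X] [InnerProductSpace ℂ X] [CompleteSpace X]
    [NormedAddCommGroup Y] [InnerProductSpace ℂ Y] [CompleteSpace Y]
    (ν μ : ℝ) (hνμ : ν ≤ μ)
    (Sν : Lp X 2 (wmeas ν) →L[ℂ] Lp Y 2 (wmeas ν))
    (Sμ : Lp X 2 (wmeas μ) →L[ℂ] Lp Y 2 (wmeas μ))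
    (hcν : ∀ t : ℝ, ∀ f : Lp X 2 (wmeas ν),
      (∀ᵐ s ∂volume, s ≤ t → f s = 0) → (∀ᵐ s ∂volume, s ≤ t → Sν f s = 0))
    (hcμ : ∀ t : ℝ, ∀ f : Lp X 2 (wmeas μ),
      (∀ᵐ s ∂volume, s ≤ t → f s = 0) → (∀ᵐ s ∂volume, s ≤ t → Sμ f s = 0))
    (𝓓 : Set (ℝ → X))
    (h𝓓 : ∀ f ∈ 𝓓, MemLp f 2 (wmeas ν) ∧ MemLp f 2 (wmeas μ))
    (hdense : Dense {g : Lp X 2 (wmeas μ) | ∃ f ∈ 𝓓, (g : ℝ → X) =ᵐ[volume] f})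
    (hagree : ∀ f ∈ 𝓓, ∀ (u : Lp X 2 (wmeas ν)) (v : Lp X 2 (wmeas μ)),
      (u : ℝ → X) =ᵐ[volume] f → (v : ℝ → X) =ᵐ[volume] f →
      (Sν u : ℝ → Y) =ᵐ[volume] (Sμ v : ℝ → Y)) :
    ∀ (u : Lp X 2 (wmeas ν)) (v : Lp X 2 (wmeas μ)),
      (u : ℝ → X) =ᵐ[volume] (v : ℝ → X) →
      (Sν u : ℝ → Y) =ᵐ[volume] (Sμ v : ℝ → Y) :=
  statement8_general ν μ hνμ Sν Sμ hcν 𝓓 h𝓓 hdense hagree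

end
end

section
/- Let (X,(Q_t)_{t∈ℝ}) and (Y,(R_t)_{t∈ℝ}) be resolution spaces and let S : dom(S) ⊆ X → Y be a densely defined, linear, continuous operator (i.e., there is K ≥ 0 with ‖Sf‖ ≤ K‖f‖ for all f ∈ dom(S)), and let S̄ ∈ L(X,Y) denote its unique continuous extension to X. Then the following conditions are equivalent: (i) for all f ∈ X and t ∈ ℝ, Q_t f = 0 implies R_t S̄ f = 0; (ii) S is causal; (iii) S is causal on D for some dense D ⊆ Y; (iv) S is strongly causal; (v) for all t ∈ ℝ, R_t S̄ Q_t = R_t S̄; (vi) for all t ∈ ℝ, (1−R_t) S̄ (1−Q_t) = S̄ (1−Q_t). -/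
open MeasureTheory Filter

noncomputable section

/-- A family `(Q_t)_{t∈ℝ}` of orthogonal projections is a resolution of the identity. -/
def IsResolution {X : Type*} [NormedAddCommGroup X] [InnerProductSpace ℂ X]
    (Q : ℝ → X →L[ℂ] X) : Prop :=
  (∀ t : ℝ, ∀ x y : X, (inner ℂ (Q t x) y : ℂ) = inner ℂ x (Q t y)) ∧
  (∀ t : ℝ, ∀ x : X, Q t (Q t x) = Q t x) ∧
  (∀ s t : ℝ, (Set.range (Q t) ⊆ Set.range (Q s) ↔ t ≤ s)) ∧
  (∀ x : X, Tendsto (fun t => Q t x) atBot (nhds 0)) ∧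
  (∀ x : X, Tendsto (fun t => Q t x) atTop (nhds x))

/-- `S` is causal on `D ⊆ Y`. -/
def CausalOn {X Y : Type*} [NormedAddCommGroup X] [InnerProductSpace ℂ X]
    [NormedAddCommGroup Y] [InnerProductSpace ℂ Y]
    (Q : ℝ → X →L[ℂ] X) (R : ℝ → Y →L[ℂ] Y) (S : X →ₗ.[ℂ] Y) (D : Set Y) : Prop :=
  ∀ r : ℝ, 0 < r → ∀ t : ℝ, ∀ φ ∈ D, ∃ C : ℝ, 0 ≤ C ∧
    ∀ f : S.domain, ‖(f : X)‖ ^ 2 + ‖S f‖ ^ 2 < r ^ 2 →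
      ‖(inner ℂ (R t (S f)) φ : ℂ)‖ ≤ C * ‖Q t (f : X)‖

/-! Since `Q t` is idempotent, `T ∘ Q t = T` holds exactly when `T` vanishes on `ker (Q t)`;
with `T = R t ∘ S̄` this is (i) ⇔ (v), and (v) ⇔ (vi) is ring algebra. From (v) one reads off
strong causality with `C = ‖R t ∘ S̄‖`, and strong causality bounds `⟨R_t S f, φ⟩` for every `φ`.
The analytic step is (iii) ⇒ (i): the causality estimate is a closed condition on `f`, so by
density of `dom S` it passes to `S̄` on the open ball, and for `Q t f = 0` it makes `R t (S̄ f)`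
orthogonal to the dense set `D`. -/

namespace ContinuousLinearMap

variable {𝕜 X Y : Type*} [RCLike 𝕜]
  [NormedAddCommGroup X] [NormedSpace 𝕜 X] [NormedAddCommGroup Y] [NormedSpace 𝕜 Y]

theorem comp_eq_self_iff_of_idempotent {P : X →L[𝕜] X} (hP : ∀ x, P (P x) = P x)
    (T : X →L[𝕜] Y) : T.comp P = T ↔ ∀ x, P x = 0 → T x = 0 := by
  constructor
  · intro h x hx
    rw [← h, comp_apply, hx, map_zero]
  · intro h
    ext x
    have hker : P (x - P x) = 0 := by rw [map_sub, hP, sub_self]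
    have hx := h _ hker
    rw [map_sub, sub_eq_zero] at hx
    exact hx.symm

theorem id_sub_comp_comp_id_sub_eq_iff (P : X →L[𝕜] X) (T : X →L[𝕜] Y) (R : Y →L[𝕜] Y) :
    (ContinuousLinearMap.id 𝕜 Y - R).comp (T.comp (ContinuousLinearMap.id 𝕜 X - P)) =
        T.comp (ContinuousLinearMap.id 𝕜 X - P) ↔
      R.comp (T.comp P) = R.comp T := by
  simp only [sub_comp, comp_sub, id_comp, comp_id]
  rw [sub_sub_sub_comm, sub_eq_self, sub_eq_zero]
  exact eq_comm

theorem norm_apply_le_of_comp_eq {P : X →L[𝕜] X} {T : X →L[𝕜] Y} (h : T.comp P = T) (x : X) :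
    ‖T x‖ ≤ ‖T‖ * ‖P x‖ := by
  conv_lhs => rw [← h]
  exact T.le_opNorm (P x)

end ContinuousLinearMap

theorem Dense.forall_le_of_isOpen {α β : Type*} [TopologicalSpace α] [TopologicalSpace β]
    [LinearOrder β] [OrderClosedTopology β] {s U : Set α} (hs : Dense s) (hU : IsOpen U)
    {g h : α → β} (hg : Continuous g) (hh : Continuous h) (hle : ∀ x ∈ U ∩ s, g x ≤ h x) :
    ∀ x ∈ U, g x ≤ h x := fun _ hx =>
  closure_minimal hle (isClosed_le hg hh) (hs.open_subset_closure_inter hU hx)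

section Causality

variable {X Y : Type*} [NormedAddCommGroup X] [InnerProductSpace ℂ X]
  [NormedAddCommGroup Y] [InnerProductSpace ℂ Y]
  {Q : ℝ → X →L[ℂ] X} {R : ℝ → Y →L[ℂ] Y} {S : X →ₗ.[ℂ] Y} {D : Set Y}

theorem causalOn_of_norm_apply_le
    (h : ∀ t : ℝ, ∃ C : ℝ, 0 ≤ C ∧ ∀ f : S.domain, ‖R t (S f)‖ ≤ C * ‖Q t (f : X)‖) :
    CausalOn Q R S D := by
  intro r _ t φ _
  obtain ⟨C, hC0, hC⟩ := h t
  refine ⟨C * ‖φ‖, by positivity, fun f _ => ?_⟩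
  calc ‖(inner ℂ (R t (S f)) φ : ℂ)‖ ≤ ‖R t (S f)‖ * ‖φ‖ := norm_inner_le_norm _ _
    _ ≤ C * ‖Q t (f : X)‖ * ‖φ‖ := by gcongr; exact hC f
    _ = C * ‖φ‖ * ‖Q t (f : X)‖ := by ring

theorem CausalOn.toPMap_of_dense (h : CausalOn Q R S D) (hS : Dense (S.domain : Set X))
    {Sbar : X →L[ℂ] Y} (hSbar : ∀ f : S.domain, Sbar (f : X) = S f) :
    CausalOn Q R ((Sbar : X →ₗ[ℂ] Y).toPMap ⊤) D := by
  intro r hr t φ hφ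
  obtain ⟨C, hC0, hC⟩ := h r hr t φ hφ
  refine ⟨C, hC0, fun f hf => ?_⟩
  have hdom : ∀ x ∈ {x | ‖x‖ ^ 2 + ‖Sbar x‖ ^ 2 < r ^ 2} ∩ (S.domain : Set X),
      ‖(inner ℂ (R t (Sbar x)) φ : ℂ)‖ ≤ C * ‖Q t x‖ := by
    rintro x ⟨hxr, hxS⟩
    lift x to S.domain using hxS
    rw [Set.mem_ofPred_eq, hSbar] at hxr
    rw [hSbar]
    exact hC x hxr
  exact hS.forall_le_of_isOpen (isOpen_lt (by fun_prop) continuous_const) (by fun_prop)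
    (by fun_prop) hdom f hf

theorem CausalOn.apply_eq_zero_of_dense {T : X →ₗ[ℂ] Y} (h : CausalOn Q R (T.toPMap ⊤) D)
    (hD : Dense D) {f : X} {t : ℝ} (hf : Q t f = 0) : R t (T f) = 0 := by
  refine hD.eq_zero_of_inner_left ℂ fun φ hφ => ?_
  obtain ⟨C, -, hC⟩ := h (‖f‖ + ‖T f‖ + 1) (by positivity) t φ hφ
  have hball : ‖f‖ ^ 2 + ‖T f‖ ^ 2 < (‖f‖ + ‖T f‖ + 1) ^ 2 := by
    nlinarith [norm_nonneg f, norm_nonneg (T f)]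
  have hle : ‖(inner ℂ (R t (T f)) φ : ℂ)‖ ≤ C * ‖Q t f‖ := hC ⟨f, trivial⟩ hball
  rw [hf, norm_zero, mul_zero] at hle
  exact norm_le_zero_iff.mp hle

end Causality

theorem statement10_general {X Y : Type*}
    [NormedAddCommGroup X] [InnerProductSpace ℂ X]
    [NormedAddCommGroup Y] [InnerProductSpace ℂ Y]
    (Q : ℝ → X →L[ℂ] X) (R : ℝ → Y →L[ℂ] Y)
    (hQ : IsResolution Q)
    (S : X →ₗ.[ℂ] Y) (hdense : Dense (S.domain : Set X))
    (Sbar : X →L[ℂ] Y) (hSbar : ∀ f : S.domain, Sbar (f : X) = S f) :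
    List.TFAE
      [∀ (f : X) (t : ℝ), Q t f = 0 → R t (Sbar f) = 0,
       CausalOn Q R S Set.univ,
       ∃ D : Set Y, Dense D ∧ CausalOn Q R S D,
       ∀ t : ℝ, ∃ C : ℝ, 0 ≤ C ∧ ∀ f : S.domain, ‖R t (S f)‖ ≤ C * ‖Q t (f : X)‖,
       ∀ t : ℝ, (R t).comp (Sbar.comp (Q t)) = (R t).comp Sbar,
       ∀ t : ℝ, (ContinuousLinearMap.id ℂ Y - R t).comp
           (Sbar.comp (ContinuousLinearMap.id ℂ X - Q t)) =
         Sbar.comp (ContinuousLinearMap.id ℂ X - Q t)] := by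
  have hker (t : ℝ) :=
    ContinuousLinearMap.comp_eq_self_iff_of_idempotent (hQ.2.1 t) ((R t).comp Sbar)
  tfae_have 1 ↔ 5 := ⟨fun h t => (hker t).2 (h · t), fun h f t => (hker t).1 (h t) f⟩
  tfae_have 5 ↔ 6 := forall_congr' fun t =>
    (ContinuousLinearMap.id_sub_comp_comp_id_sub_eq_iff (Q t) Sbar (R t)).symm
  tfae_have 5 → 4 := fun h t => ⟨_, norm_nonneg _, fun f => by
    simpa only [ContinuousLinearMap.comp_apply, hSbar] using
      ContinuousLinearMap.norm_apply_le_of_comp_eq (T := (R t).comp Sbar) (h t) (f : X)⟩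
  tfae_have 4 → 2 := causalOn_of_norm_apply_le
  tfae_have 2 → 3 := fun h => ⟨Set.univ, dense_univ, h⟩
  tfae_have 3 → 1 := fun ⟨_, hD, h⟩ _ _ hf =>
    (h.toPMap_of_dense hdense hSbar).apply_eq_zero_of_dense hD hf
  tfae_finish

/-- For a densely defined continuous linear operator `S` between
resolution spaces, with continuous extension `S̄ ∈ L(X,Y)`, the six formulations of
causality (i)–(vi) are equivalent. -/
theorem statement10 {X Y : Type*}
    [NormedAddCommGroup X] [InnerProductSpace ℂ X] [CompleteSpace X]
    [NormedAddCommGroup Y] [InnerProductSpace ℂ Y] [CompleteSpace Y]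
    (Q : ℝ → X →L[ℂ] X) (R : ℝ → Y →L[ℂ] Y)
    (hQ : IsResolution Q) (hR : IsResolution R)
    (S : X →ₗ.[ℂ] Y) (hdense : Dense (S.domain : Set X))
    (K : ℝ) (hK : 0 ≤ K) (hcont : ∀ f : S.domain, ‖S f‖ ≤ K * ‖(f : X)‖)
    (Sbar : X →L[ℂ] Y) (hSbar : ∀ f : S.domain, Sbar (f : X) = S f) :
    List.TFAE
      [∀ (f : X) (t : ℝ), Q t f = 0 → R t (Sbar f) = 0,
       CausalOn Q R S Set.univ,
       ∃ D : Set Y, Dense D ∧ CausalOn Q R S D,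
       ∀ t : ℝ, ∃ C : ℝ, 0 ≤ C ∧ ∀ f : S.domain, ‖R t (S f)‖ ≤ C * ‖Q t (f : X)‖,
       ∀ t : ℝ, (R t).comp (Sbar.comp (Q t)) = (R t).comp Sbar,
       ∀ t : ℝ, (ContinuousLinearMap.id ℂ Y - R t).comp
           (Sbar.comp (ContinuousLinearMap.id ℂ X - Q t)) =
         Sbar.comp (ContinuousLinearMap.id ℂ X - Q t)] :=
  statement10_general Q R hQ S hdense Sbar hSbar

end
end

section
/- Let (X,(Q_t)_{t∈ℝ}) be a resolution space, let S : dom(S) ⊆ X → X be a linear operator and let c > 0. Assume that |⟨Q_t S f, f⟩| ≥ c·⟨Q_t f, f⟩ for every t ∈ ℝ and every f ∈ dom(S). Then S is injective, and the inverse S^{−1} : ran(S) → X satisfies |⟨Q_t S^{−1} g, φ⟩| ≤ (‖φ‖/c)·‖Q_t g‖ for all t ∈ ℝ, φ ∈ X and g ∈ ran(S). -/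
/-!
Since `Q_t` is an orthogonal projection, `⟨Q_t S f, f⟩ = ⟨Q_t S f, Q_t f⟩`, so Cauchy–Schwarz
turns the hypothesis into `c ‖Q_t f‖ ≤ ‖Q_t S f‖`. If `S f = 0` this kills every `Q_t f`, and
`Q_t f → f` gives `f = 0`; one more Cauchy–Schwarz gives the bound on the inverse.
-/

open MeasureTheory Filter

noncomputable section

section Projection

variable {𝕜 X : Type*} [RCLike 𝕜] [NormedAddCommGroup X] [InnerProductSpace 𝕜 X]
  {P : X →L[𝕜] X}

theorem inner_apply_eq_inner_apply_apply (hsa : ∀ x y, inner 𝕜 (P x) y = inner 𝕜 x (P y))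
    (hidem : ∀ x, P (P x) = P x) (y x : X) :
    inner 𝕜 (P y) x = inner 𝕜 (P y) (P x) := by
  rw [hsa, hsa, hidem]

theorem mul_norm_apply_le_of_mul_sq_le_norm_inner
    (hsa : ∀ x y, inner 𝕜 (P x) y = inner 𝕜 x (P y)) (hidem : ∀ x, P (P x) = P x)
    {c : ℝ} {f g : X} (h : c * ‖P f‖ ^ 2 ≤ ‖inner 𝕜 (P g) f‖) :
    c * ‖P f‖ ≤ ‖P g‖ := by
  have hcs : c * ‖P f‖ * ‖P f‖ ≤ ‖P g‖ * ‖P f‖ := calc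
    c * ‖P f‖ * ‖P f‖ = c * ‖P f‖ ^ 2 := by ring
    _ ≤ ‖inner 𝕜 (P g) (P f)‖ := by rwa [← inner_apply_eq_inner_apply_apply hsa hidem]
    _ ≤ ‖P g‖ * ‖P f‖ := norm_inner_le_norm _ _
  rcases (norm_nonneg (P f)).eq_or_lt with hzero | hpos
  · rw [← hzero, mul_zero]
    exact norm_nonneg _
  · exact le_of_mul_le_mul_right hcs hpos

end Projection

theorem norm_inner_le_div_mul_of_mul_norm_le {𝕜 X : Type*} [RCLike 𝕜] [NormedAddCommGroup X]
    [InnerProductSpace 𝕜 X] {c : ℝ} (hc : 0 < c) {x y : X} (h : c * ‖x‖ ≤ ‖y‖) (φ : X) :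
    ‖inner 𝕜 x φ‖ ≤ ‖φ‖ / c * ‖y‖ := calc
  ‖inner 𝕜 x φ‖ ≤ ‖x‖ * ‖φ‖ := norm_inner_le_norm _ _
  _ ≤ ‖y‖ / c * ‖φ‖ := by gcongr; rwa [le_div_iff₀' hc]
  _ = ‖φ‖ / c * ‖y‖ := by ring

namespace IsResolution

variable {X : Type*} [NormedAddCommGroup X] [InnerProductSpace ℂ X] {Q : ℝ → X →L[ℂ] X}

theorem eq_zero_of_forall_apply_eq_zero (hQ : IsResolution Q) {x : X} (hx : ∀ t, Q t x = 0) :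
    x = 0 :=
  tendsto_nhds_unique (hQ.2.2.2.2 x) (by simpa only [hx] using tendsto_const_nhds)

theorem injective_of_mul_norm_apply_le (hQ : IsResolution Q) {S : X →ₗ.[ℂ] X} {c : ℝ}
    (hc : 0 < c) (hS : ∀ t (f : S.domain), c * ‖Q t f‖ ≤ ‖Q t (S f)‖) :
    Function.Injective S := by
  refine (injective_iff_map_eq_zero S.toFun).2 fun f hf => ?_
  have hQf : ∀ t, Q t f = 0 := fun t => by
    have := hS t f
    rw [LinearPMap.toFun_eq_coe] at hf
    rw [hf, map_zero, norm_zero] at this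
    exact norm_le_zero_iff.1 (nonpos_of_mul_nonpos_right this hc)
  exact Subtype.ext (hQ.eq_zero_of_forall_apply_eq_zero hQf)

end IsResolution

theorem statement11_general {X : Type*}
    [NormedAddCommGroup X] [InnerProductSpace ℂ X]
    (Q : ℝ → X →L[ℂ] X) (hQ : IsResolution Q)
    (S : X →ₗ.[ℂ] X) (c : ℝ) (hc : 0 < c)
    (hpos : ∀ t : ℝ, ∀ f : S.domain,
      c * ‖Q t (f : X)‖ ^ 2 ≤ ‖(inner ℂ (Q t (S f)) ((f : X)) : ℂ)‖) :
    (∀ f g : S.domain, S f = S g → f = g) ∧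
    (∀ (t : ℝ) (φ : X) (f : S.domain),
      ‖(inner ℂ (Q t (f : X)) φ : ℂ)‖ ≤ (‖φ‖ / c) * ‖Q t (S f)‖) := by
  have hbound : ∀ t (f : S.domain), c * ‖Q t f‖ ≤ ‖Q t (S f)‖ := fun t f =>
    mul_norm_apply_le_of_mul_sq_le_norm_inner (hQ.1 t) (hQ.2.1 t) (hpos t f)
  exact ⟨fun f g => (hQ.injective_of_mul_norm_apply_le hc hbound).eq_iff.1,
    fun t φ f => norm_inner_le_div_mul_of_mul_norm_le hc (hbound t f) φ⟩

/-- Let `(X,(Q_t)_t)` be a resolution space, `S` a linear operator in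
`X` and `c > 0` with `|⟨Q_t S f, f⟩| ≥ c ⟨Q_t f, f⟩` (`= c‖Q_t f‖²`) for all `t` and
`f ∈ dom S`.  Then `S` is injective and its inverse satisfies
`|⟨Q_t S⁻¹ g, φ⟩| ≤ (‖φ‖/c) ‖Q_t g‖` for all `t`, `φ ∈ X` and `g ∈ ran S`. -/
theorem statement11 {X : Type*}
    [NormedAddCommGroup X] [InnerProductSpace ℂ X] [CompleteSpace X]
    (Q : ℝ → X →L[ℂ] X) (hQ : IsResolution Q)
    (S : X →ₗ.[ℂ] X) (c : ℝ) (hc : 0 < c)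
    (hpos : ∀ t : ℝ, ∀ f : S.domain,
      c * ‖Q t (f : X)‖ ^ 2 ≤ ‖(inner ℂ (Q t (S f)) ((f : X)) : ℂ)‖) :
    (∀ f g : S.domain, S f = S g → f = g) ∧
    (∀ (t : ℝ) (φ : X) (f : S.domain),
      ‖(inner ℂ (Q t (f : X)) φ : ℂ)‖ ≤ (‖φ‖ / c) * ‖Q t (S f)‖) :=
  statement11_general Q hQ S c hc hpos

end
end

section
/- Let X be a complex Hilbert space, c > 0, and let B : dom(B) ⊆ X → X be a densely defined linear operator satisfying Re⟨Bφ,φ⟩ ≥ c·⟨φ,φ⟩ for all φ ∈ dom(B). Then: (a) B is closable; (b) if, in addition, |⟨B*ψ,ψ⟩| ≥ c·⟨ψ,ψ⟩ for all ψ ∈ dom(B*), then the closure B̄ is a bijection from dom(B̄) onto X, its inverse is a bounded linear operator with ‖B̄^{−1}‖ ≤ 1/c, and ran(B) is dense in X; (c) if B is continuous (there is K ≥ 0 with ‖Bφ‖ ≤ K‖φ‖ for all φ ∈ dom(B)), then the hypothesis of (a) implies the additional hypothesis of (b). -/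
/-!
Coercivity `c ‖x‖² ≤ Re ⟪y, x⟫` is a closed condition on pairs `(x, y)`, so it passes from the
graph of `B` to its closure. If `(0, y)` lies in that closed subspace, adding `t • (x, B x)` gives
a nonnegative quadratic in `t` without constant term, whence `Re ⟪y, x⟫ = 0` on the dense domain
and `y = 0`: `B` is closable. The closure is then bounded below by `c`, so it is injective with
closed range; the adjoint hypothesis with `η = 0` makes `ran B` dense, so `B̄` is onto.
A bounded `B` extends to a continuous coercive `S` on `X`, and the adjoint relation says
`η = S† ψ`, so `Re ⟪η, ψ⟫ = Re ⟪S ψ, ψ⟫ ≥ c ‖ψ‖²`.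
-/

open RCLike InnerProductSpace

section Coercive

variable (𝕜 : Type*) {E : Type*} [RCLike 𝕜] [NormedAddCommGroup E] [InnerProductSpace 𝕜 E]

def IsCoerciveGraph (c : ℝ) (S : Set (E × E)) : Prop :=
  S ⊆ {p | c * ‖p.1‖ ^ 2 ≤ re ⟪p.2, p.1⟫_𝕜}

variable {𝕜} {c : ℝ}

theorem IsCoerciveGraph.closure {S : Set (E × E)} (h : IsCoerciveGraph 𝕜 c S) :
    IsCoerciveGraph 𝕜 c (closure S) := by
  exact closure_minimal h (isClosed_le (by fun_prop) (by fun_prop))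

theorem IsCoerciveGraph.mul_norm_le {S : Set (E × E)} (h : IsCoerciveGraph 𝕜 c S)
    {p : E × E} (hp : p ∈ S) : c * ‖p.1‖ ≤ ‖p.2‖ := by
  rcases eq_or_ne p.1 0 with h0 | h0
  · simp [h0]
  refine le_of_mul_le_mul_right ?_ (norm_pos_iff.mpr h0)
  calc c * ‖p.1‖ * ‖p.1‖ = c * ‖p.1‖ ^ 2 := by ring
    _ ≤ re ⟪p.2, p.1⟫_𝕜 := h hp
    _ ≤ ‖⟪p.2, p.1⟫_𝕜‖ := re_le_norm _
    _ ≤ ‖p.2‖ * ‖p.1‖ := norm_inner_le_norm _ _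

/-- Coercivity at `(0, y) + t • p` is a nonnegative quadratic in `t : ℝ` with no constant term,
so its linear coefficient `Re ⟪y, p.1⟫` vanishes. -/
theorem IsCoerciveGraph.re_inner_eq_zero {G : Submodule 𝕜 (E × E)}
    (h : IsCoerciveGraph 𝕜 c (G : Set (E × E))) {y : E} (hy : (0, y) ∈ G) {p : E × E}
    (hp : p ∈ G) : re ⟪y, p.1⟫_𝕜 = 0 := by
  have hquad : ∀ t : ℝ,
      0 ≤ (re ⟪p.2, p.1⟫_𝕜 - c * ‖p.1‖ ^ 2) * (t * t) + re ⟪y, p.1⟫_𝕜 * t + 0 := by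
    intro t
    have ht := h (G.add_mem hy (G.smul_mem (t : 𝕜) hp))
    simp only [Set.mem_ofPred_eq, Prod.fst_add, Prod.snd_add, Prod.smul_fst, Prod.smul_snd,
      zero_add, norm_smul, inner_add_left, inner_smul_left, inner_smul_right, conj_ofReal,
      map_add, re_ofReal_mul, norm_ofReal, mul_pow, sq_abs] at ht
    linarith
  have hdiscrim := discrim_le_zero hquad
  rw [discrim] at hdiscrim
  nlinarith [sq_nonneg (re ⟪y, p.1⟫_𝕜)]

end Coercive

theorem eq_zero_of_re_inner_eq_zero_of_dense {𝕜 E : Type*} [RCLike 𝕜] [NormedAddCommGroup E]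
    [InnerProductSpace 𝕜 E] {s : Set E} (hs : Dense s) {y : E}
    (h : ∀ x ∈ s, re ⟪y, x⟫_𝕜 = 0) : y = 0 := by
  have hy := hs.induction (P := fun x => re ⟪y, x⟫_𝕜 = 0) h
    (isClosed_eq (by fun_prop) continuous_const) y
  rwa [inner_self_eq_norm_sq, sq_eq_zero_iff, norm_eq_zero] at hy

namespace LinearPMap

section Normed

variable {𝕜 E F : Type*} [NormedField 𝕜] [NormedAddCommGroup E] [NormedAddCommGroup F]
  [NormedSpace 𝕜 E] [NormedSpace 𝕜 F]

theorem exists_continuousLinearMap_extends [CompleteSpace F] {T : E →ₗ.[𝕜] F}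
    (hdense : Dense (T.domain : Set E)) {K : ℝ} (hK : ∀ x : T.domain, ‖T x‖ ≤ K * ‖(x : E)‖) :
    ∃ S : E →L[𝕜] F, ∀ x : T.domain, S x = T x :=
  ⟨(T.toFun.mkContinuous K hK).extend T.domain.subtypeL, fun x =>
    ContinuousLinearMap.extend_eq _ hdense.denseRange_val (isUniformInducing_val _) x⟩

theorem IsClosed.isClosed_range [CompleteSpace E] [CompleteSpace F] {T : E →ₗ.[𝕜] F}
    (hT : T.IsClosed) {c : ℝ} (hc : 0 < c) (h : ∀ x : T.domain, c * ‖(x : E)‖ ≤ ‖T x‖) :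
    _root_.IsClosed (Set.range T) := by
  have : CompleteSpace T.graph := hT.completeSpace_coe
  let f : T.graph →ₗ[𝕜] F := (LinearMap.snd 𝕜 E F).comp T.graph.subtype
  have hf : AntilipschitzWith ⟨c⁻¹ + 1, by positivity⟩ f := by
    refine AddMonoidHomClass.antilipschitz_of_bound f fun ⟨⟨x, y⟩, hp⟩ => ?_
    obtain ⟨x, rfl, rfl⟩ := T.mem_graph_iff.mp hp
    have hx : ‖(x : E)‖ ≤ c⁻¹ * ‖T x‖ := (le_inv_mul_iff₀ hc).mpr (h x)
    have hy := norm_nonneg (T x)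
    simp only [f, LinearMap.comp_apply, Submodule.subtype_apply, LinearMap.snd_apply,
      Submodule.coe_norm, norm_prod_le_iff]
    change _ ≤ (c⁻¹ + 1) * _ ∧ _ ≤ (c⁻¹ + 1) * _
    constructor <;> nlinarith [inv_pos.mpr hc]
  have hrange : Set.range f = Set.range T := by
    ext y
    simp [f]
  rw [← hrange]
  exact hf.isClosed_range (uniformContinuous_snd.comp uniformContinuous_subtype_val)

theorem surjective_closure_of_isClosed_range {T : E →ₗ.[𝕜] F} (hdense : DenseRange T)
    (hclosed : _root_.IsClosed (Set.range T.closure)) : Function.Surjective T.closure := by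
  have hsub : Set.range T ⊆ Set.range T.closure := fun y hy => by
    obtain ⟨x, hx⟩ := mem_range_iff.mp hy
    exact mem_range_iff.mpr ⟨x, le_graph_of_le T.le_closure hx⟩
  refine Set.range_eq_univ.mp (Set.eq_univ_of_univ_subset ?_)
  rw [← hdense.closure_eq]
  exact closure_minimal hsub hclosed

end Normed

section InnerProduct

variable {𝕜 E : Type*} [RCLike 𝕜] [NormedAddCommGroup E] [InnerProductSpace 𝕜 E] {c : ℝ}

theorem isCoerciveGraph_graph_iff {T : E →ₗ.[𝕜] E} :
    IsCoerciveGraph 𝕜 c (T.graph : Set (E × E)) ↔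
      ∀ x : T.domain, c * ‖(x : E)‖ ^ 2 ≤ re ⟪T x, x⟫_𝕜 := by
  refine ⟨fun h x => h (T.mem_graph x), fun h ⟨x, y⟩ hp => ?_⟩
  obtain ⟨x, rfl, rfl⟩ := T.mem_graph_iff.mp hp
  exact h x

theorem isClosable_of_isCoerciveGraph {T : E →ₗ.[𝕜] E} (hdense : Dense (T.domain : Set E))
    (h : IsCoerciveGraph 𝕜 c (T.graph : Set (E × E))) : T.IsClosable := by
  have hG : IsCoerciveGraph 𝕜 c (T.graph.topologicalClosure : Set (E × E)) := by
    rw [Submodule.topologicalClosure_coe]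
    exact h.closure
  refine ⟨T.graph.topologicalClosure.toLinearPMap,
    (Submodule.toLinearPMap_graph_eq _ fun p hp hp0 => ?_).symm⟩
  obtain ⟨x, y⟩ := p
  obtain rfl : x = 0 := hp0
  refine eq_zero_of_re_inner_eq_zero_of_dense (𝕜 := 𝕜) hdense fun x hx => ?_
  exact hG.re_inner_eq_zero hp (T.graph.le_topologicalClosure (T.mem_graph ⟨x, hx⟩))

theorem IsClosable.isCoerciveGraph_closure {T : E →ₗ.[𝕜] E} (hT : T.IsClosable)
    (h : IsCoerciveGraph 𝕜 c (T.graph : Set (E × E))) :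
    IsCoerciveGraph 𝕜 c (T.closure.graph : Set (E × E)) := by
  rw [← hT.graph_closure_eq_closure_graph, Submodule.topologicalClosure_coe]
  exact h.closure

theorem injective_of_isCoerciveGraph {T : E →ₗ.[𝕜] E} (hc : 0 < c)
    (h : IsCoerciveGraph 𝕜 c (T.graph : Set (E × E))) : Function.Injective T := by
  refine (injective_iff_map_eq_zero T.toFun).mpr fun x hx => Subtype.ext ?_
  have hx' := h.mul_norm_le (T.mem_graph x)
  rw [← T.toFun_eq_coe, hx, norm_zero] at hx'
  exact norm_le_zero_iff.mp (le_of_mul_le_mul_left (by simpa using hx') hc)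

theorem denseRange_of_forall_inner_apply_eq_zero {F : Type*} [NormedAddCommGroup F]
    [InnerProductSpace 𝕜 F] [CompleteSpace F] {T : E →ₗ.[𝕜] F}
    (h : ∀ ψ : F, (∀ φ : T.domain, ⟪T φ, ψ⟫_𝕜 = 0) → ψ = 0) : DenseRange T := by
  have horth : (LinearMap.range T.toFun)ᗮ = ⊥ :=
    eq_bot_iff.mpr fun ψ hψ => h ψ fun φ => hψ _ ⟨φ, rfl⟩
  have hdense := Submodule.dense_iff_topologicalClosure_eq_top.mpr
    (Submodule.topologicalClosure_eq_top_iff.mpr horth)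
  rwa [LinearMap.coe_range] at hdense

theorem mul_norm_sq_le_re_inner_of_bounded [CompleteSpace E] {T : E →ₗ.[𝕜] E}
    (hdense : Dense (T.domain : Set E)) {K : ℝ} (hK : ∀ x : T.domain, ‖T x‖ ≤ K * ‖(x : E)‖)
    (h : ∀ x : T.domain, c * ‖(x : E)‖ ^ 2 ≤ re ⟪T x, x⟫_𝕜) {ψ η : E}
    (hψη : ∀ φ : T.domain, ⟪T φ, ψ⟫_𝕜 = ⟪(φ : E), η⟫_𝕜) : c * ‖ψ‖ ^ 2 ≤ re ⟪η, ψ⟫_𝕜 := by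
  obtain ⟨S, hS⟩ := exists_continuousLinearMap_extends hdense hK
  have hSψ : c * ‖ψ‖ ^ 2 ≤ re ⟪S ψ, ψ⟫_𝕜 :=
    hdense.induction (P := fun x => c * ‖x‖ ^ 2 ≤ re ⟪S x, x⟫_𝕜)
      (fun x hx => hS ⟨x, hx⟩ ▸ h ⟨x, hx⟩) (isClosed_le (by fun_prop) (by fun_prop)) ψ
  have hSη : ⟪S ψ, ψ⟫_𝕜 = ⟪ψ, η⟫_𝕜 :=
    hdense.induction (P := fun x => ⟪S x, ψ⟫_𝕜 = ⟪x, η⟫_𝕜)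
      (fun x hx => hS ⟨x, hx⟩ ▸ hψη ⟨x, hx⟩) (isClosed_eq (by fun_prop) (by fun_prop)) ψ
  rwa [hSη, inner_re_symm] at hSψ

end InnerProduct

end LinearPMap

/-- Let `B` be a densely defined linear operator in a complex Hilbert
space with `Re⟨Bφ,φ⟩ ≥ c⟨φ,φ⟩` for all `φ ∈ dom B`, `c > 0`.  Then (a) `B` is closable;
(b) if in addition `|⟨B*ψ,ψ⟩| ≥ c⟨ψ,ψ⟩` on `dom B*` (formulated via the defining
property of the adjoint), then the closure `B̄` is a bijection onto `X` with
`‖B̄⁻¹‖ ≤ 1/c` and `ran B` is dense; (c) if `B` is continuous, the hypothesis of (a)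
implies the additional hypothesis of (b). -/
theorem statement12 {X : Type*}
    [NormedAddCommGroup X] [InnerProductSpace ℂ X] [CompleteSpace X]
    (B : X →ₗ.[ℂ] X) (hdense : Dense (B.domain : Set X)) (c : ℝ) (hc : 0 < c)
    (hpos : ∀ φ : B.domain, c * ‖(φ : X)‖ ^ 2 ≤ (inner ℂ (B φ) ((φ : X)) : ℂ).re) :
    B.IsClosable ∧
    ((∀ ψ η : X, (∀ φ : B.domain, (inner ℂ (B φ) ψ : ℂ) = inner ℂ ((φ : X)) η) →
        c * ‖ψ‖ ^ 2 ≤ ‖(inner ℂ η ψ : ℂ)‖) →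
      (∀ x y : B.closure.domain, B.closure x = B.closure y → x = y) ∧
      (∀ y : X, ∃ x : B.closure.domain, B.closure x = y) ∧
      (∀ x : B.closure.domain, ‖(x : X)‖ ≤ (1 / c) * ‖B.closure x‖) ∧
      Dense {y : X | ∃ φ : B.domain, B φ = y}) ∧
    ((∃ K : ℝ, ∀ φ : B.domain, ‖B φ‖ ≤ K * ‖(φ : X)‖) →
      ∀ ψ η : X, (∀ φ : B.domain, (inner ℂ (B φ) ψ : ℂ) = inner ℂ ((φ : X)) η) →
        c * ‖ψ‖ ^ 2 ≤ ‖(inner ℂ η ψ : ℂ)‖) := by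
  have hgraph : IsCoerciveGraph ℂ c (B.graph : Set (X × X)) :=
    LinearPMap.isCoerciveGraph_graph_iff.mpr hpos
  have hB : B.IsClosable := LinearPMap.isClosable_of_isCoerciveGraph hdense hgraph
  have hgraph_closure := hB.isCoerciveGraph_closure hgraph
  have hbelow : ∀ x : B.closure.domain, c * ‖(x : X)‖ ≤ ‖B.closure x‖ :=
    fun x => hgraph_closure.mul_norm_le (B.closure.mem_graph x)
  refine ⟨hB, fun hadj => ?_, fun ⟨K, hK⟩ ψ η hψη => ?_⟩
  · have hrange : DenseRange B := by
      refine LinearPMap.denseRange_of_forall_inner_apply_eq_zero fun ψ hψ => ?_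
      have hψ0 := hadj ψ 0 (by simpa using hψ)
      rw [inner_zero_left, norm_zero] at hψ0
      simpa using nonpos_of_mul_nonpos_right hψ0 hc
    refine ⟨LinearPMap.injective_of_isCoerciveGraph hc hgraph_closure,
      LinearPMap.surjective_closure_of_isClosed_range hrange
        (hB.closure_isClosed.isClosed_range hc hbelow), fun x => ?_, hrange⟩
    rw [one_div, le_inv_mul_iff₀ hc]
    exact hbelow x
  · exact (LinearPMap.mul_norm_sq_le_re_inner_of_bounded hdense hK hpos hψη).trans
      (Complex.re_le_norm _)
end

section
/- Let X be a complex Hilbert space, let D : dom(D) ⊆ X → X be a densely defined, closed, linear operator with ran(D) = X, let M, N ∈ L(X) be bounded linear operators, and let c_d, c_m > 0. Assume that Re⟨Dφ,φ⟩ ≥ c_d·⟨φ,φ⟩ and Re⟨Mφ,φ⟩ ≥ c_m·⟨φ,φ⟩ for all φ ∈ dom(D), and that ‖N‖ < c_d·c_m. Then: (a) the operator DM (with domain {x ∈ X : Mx ∈ dom(D)}, acting as x ↦ D(Mx)) is a bijection from its domain onto X with bounded inverse (DM)^{−1} ∈ L(X); (b) the operator B := DM − N (same domain, Bx = D(Mx)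 − Nx) is a bijection from its domain onto X, its inverse is the bounded operator given by the norm-convergent series B^{−1} = Σ_{k=0}^{∞} ((DM)^{−1} N)^{k} (DM)^{−1}, and ‖B^{−1}‖ ≤ 1/(c_d·c_m − ‖N‖). -/
/-!
Coercivity makes `D` and `M` bounded below by `cd` and `cm`, and coercivity of `M` passes from
the dense set `dom D` to all of `X` by continuity. `D` is onto by hypothesis, and `M` is onto
because a coercive operator has closed range with trivial orthogonal complement. Hence
`T = M⁻¹ D⁻¹` is a bounded inverse of `DM` with `‖T‖ ≤ 1 / (cd cm)`. Since
`‖T N‖ ≤ ‖N‖ / (cd cm) < 1` and `DM - N = DM (1 - T N)` on `dom (DM)`, the operator `DM - N` is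
inverted by the Neumann series `(1 - T N)⁻¹ T = ∑ (T N)ᵏ T`, whose norm is at most
`‖T‖ / (1 - ‖T‖ ‖N‖) ≤ 1 / (cd cm - ‖N‖)`.
-/

open RCLike

section Neumann

variable {𝕜 E : Type*} [NontriviallyNormedField 𝕜] [NormedAddCommGroup E] [NormedSpace 𝕜 E]

theorem ContinuousLinearMap.norm_mul_norm_lt_one {T N : E →L[𝕜] E} {c : ℝ} (hT : ‖T‖ ≤ c⁻¹)
    (hN : ‖N‖ < c) : ‖T‖ * ‖N‖ < 1 := by
  have hc : 0 < c := (norm_nonneg N).trans_lt hN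
  calc ‖T‖ * ‖N‖ ≤ c⁻¹ * ‖N‖ := by gcongr
    _ < c⁻¹ * c := by gcongr
    _ = 1 := inv_mul_cancel₀ hc.ne'

noncomputable def neumannInverse (T N : E →L[𝕜] E) : E →L[𝕜] E :=
  (∑' k : ℕ, (T * N) ^ k) * T

variable {T N : E →L[𝕜] E}

theorem norm_neumannInverse_le {c : ℝ} (hT : ‖T‖ ≤ c⁻¹) (hN : ‖N‖ < c) :
    ‖neumannInverse T N‖ ≤ (c - ‖N‖)⁻¹ := by
  have hc : 0 < c := (norm_nonneg N).trans_lt hN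
  have hTN := ContinuousLinearMap.norm_mul_norm_lt_one hT hN
  have hG : ‖∑' k : ℕ, (T * N) ^ k‖ ≤ (1 - ‖T‖ * ‖N‖)⁻¹ := by
    have h1 : ‖(1 : E →L[𝕜] E)‖ ≤ 1 := ContinuousLinearMap.norm_id_le
    have h2 : ‖T * N‖ ≤ ‖T‖ * ‖N‖ := norm_mul_le T N
    calc ‖∑' k : ℕ, (T * N) ^ k‖ ≤ ‖(1 : E →L[𝕜] E)‖ - 1 + (1 - ‖T * N‖)⁻¹ :=
          tsum_geometric_le_of_norm_lt_one _ (h2.trans_lt hTN)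
      _ ≤ (1 - ‖T‖ * ‖N‖)⁻¹ := by
          have : (1 - ‖T * N‖)⁻¹ ≤ (1 - ‖T‖ * ‖N‖)⁻¹ := by gcongr
          linarith
  have hTc : ‖T‖ * c ≤ 1 := by rwa [← le_div_iff₀ hc, one_div]
  calc ‖neumannInverse T N‖ ≤ ‖T‖ / (1 - ‖T‖ * ‖N‖) := by
        rw [div_eq_inv_mul]
        exact (norm_mul_le _ _).trans (by gcongr)
    _ ≤ (c - ‖N‖)⁻¹ := by
        rw [div_le_iff₀ (by linarith), le_inv_mul_iff₀ (by linarith)]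
        nlinarith

variable [CompleteSpace E]

theorem hasSum_neumannInverse (h : ‖T * N‖ < 1) :
    HasSum (fun k : ℕ => (T * N) ^ k * T) (neumannInverse T N) :=
  (summable_geometric_of_norm_lt_one h).hasSum.mul_right T

theorem neumannInverse_apply (h : ‖T * N‖ < 1) (y : E) :
    neumannInverse T N y = T (y + N (neumannInverse T N y)) := by
  have hG : ∑' k : ℕ, (T * N) ^ k = 1 + T * N * ∑' k : ℕ, (T * N) ^ k := by
    have := mul_neg_geom_series (T * N) h
    rwa [sub_mul, one_mul, sub_eq_iff_eq_add] at this
  conv_lhs => rw [neumannInverse, mul_apply_eq_comp, hG]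
  simp [neumannInverse, map_add]

theorem neumannInverse_apply_eq_of_apply_eq (h : ‖T * N‖ < 1) {x z : E}
    (hz : T z = x - T (N x)) : neumannInverse T N z = x := by
  have hx : T z = (1 - T * N) x := hz
  rw [neumannInverse, mul_apply_eq_comp, hx, ← mul_apply_eq_comp, geom_series_mul_neg (T * N) h,
    one_apply_eq_self]

end Neumann

section BoundedBelow

variable {𝕜 E F : Type*} [NontriviallyNormedField 𝕜] [NormedAddCommGroup E] [NormedSpace 𝕜 E]
  [NormedAddCommGroup F] [NormedSpace 𝕜 F]

theorem LinearPMap.exists_inverse_of_surjective (D : E →ₗ.[𝕜] F) (hsurj : Function.Surjective D)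
    {c : ℝ} (hc : 0 < c) (hD : ∀ φ : D.domain, c * ‖(φ : E)‖ ≤ ‖D φ‖) :
    ∃ S : F →L[𝕜] E, ‖S‖ ≤ c⁻¹ ∧ (∀ y, ∃ h : S y ∈ D.domain, D ⟨S y, h⟩ = y) ∧
      ∀ φ : D.domain, S (D φ) = φ := by
  have hinj : Function.Injective D := by
    refine (injective_iff_map_eq_zero D.toFun).2 fun φ hφ => ?_
    have := hD φ
    rw [show D φ = 0 from hφ, norm_zero] at this
    exact Subtype.ext (norm_le_zero_iff.1 (nonpos_of_mul_nonpos_right this hc))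
  let e := LinearEquiv.ofBijective D.toFun ⟨hinj, hsurj⟩
  have he : ∀ y, D (e.symm y) = y := e.apply_symm_apply
  refine ⟨(D.domain.subtype ∘ₗ e.symm.toLinearMap).mkContinuous c⁻¹ fun y => ?_,
    LinearMap.mkContinuous_norm_le _ (inv_nonneg.2 hc.le) _, fun y => ⟨(e.symm y).2, he y⟩,
    fun φ => congrArg Subtype.val (e.symm_apply_apply φ)⟩
  rw [← div_eq_inv_mul, le_div_iff₀' hc]
  conv_rhs => rw [← he y]
  exact hD (e.symm y)

theorem LinearPMap.exists_inverse_comp_of_surjective [CompleteSpace E] (D : E →ₗ.[𝕜] E)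
    (hsurj : Function.Surjective D) {cd cm : ℝ} (hcd : 0 < cd) (hcm : 0 < cm)
    (hD : ∀ φ : D.domain, cd * ‖(φ : E)‖ ≤ ‖D φ‖) {M : E →L[𝕜] E} (hMu : IsUnit M)
    (hM : ∀ x, cm * ‖x‖ ≤ ‖M x‖) :
    ∃ T : E →L[𝕜] E, ‖T‖ ≤ (cd * cm)⁻¹ ∧
      (∀ y, ∃ h : M (T y) ∈ D.domain, D ⟨M (T y), h⟩ = y) ∧
      ∀ (x : E) (h : M x ∈ D.domain), T (D ⟨M x, h⟩) = x := by
  obtain ⟨S, hS, hDS, hSD⟩ := D.exists_inverse_of_surjective hsurj hcd hD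
  have hMM : ∀ z, M (Ring.inverse M z) = z := fun z => by
    rw [← mul_apply_eq_comp, Ring.mul_inverse_cancel M hMu, one_apply_eq_self]
  have hinv : ‖Ring.inverse M‖ ≤ cm⁻¹ :=
    ContinuousLinearMap.opNorm_le_bound _ (inv_nonneg.2 hcm.le) fun z => by
      rw [← div_eq_inv_mul, le_div_iff₀' hcm]
      simpa only [hMM] using hM (Ring.inverse M z)
  refine ⟨Ring.inverse M * S, ?_, fun y => ?_, fun x h => ?_⟩
  · calc ‖Ring.inverse M * S‖ ≤ cm⁻¹ * cd⁻¹ := (norm_mul_le _ _).trans (by gcongr)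
      _ = (cd * cm)⁻¹ := by rw [mul_inv, mul_comm]
  · rw [mul_apply_eq_comp, hMM]
    exact hDS y
  · rw [mul_apply_eq_comp, hSD, ← mul_apply_eq_comp, Ring.inverse_mul_cancel M hMu,
      one_apply_eq_self]

end BoundedBelow

section Coercive

variable {𝕜 E : Type*} [RCLike 𝕜] [NormedAddCommGroup E] [InnerProductSpace 𝕜 E]

theorem mul_norm_le_norm_of_mul_sq_le_re_inner {c : ℝ} {x y : E}
    (h : c * ‖x‖ ^ 2 ≤ re (inner 𝕜 y x)) : c * ‖x‖ ≤ ‖y‖ := by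
  rcases (norm_nonneg x).eq_or_lt with hx | hx
  · rw [← hx, mul_zero]
    exact norm_nonneg y
  refine le_of_mul_le_mul_right ?_ hx
  calc c * ‖x‖ * ‖x‖ = c * ‖x‖ ^ 2 := by ring
    _ ≤ re (inner 𝕜 y x) := h
    _ ≤ ‖inner 𝕜 y x‖ := re_le_norm _
    _ ≤ ‖y‖ * ‖x‖ := norm_inner_le_norm y x

theorem ContinuousLinearMap.mul_sq_le_re_inner_of_dense (A : E →L[𝕜] E) {s : Set E}
    (hs : Dense s) {c : ℝ} (h : ∀ x ∈ s, c * ‖x‖ ^ 2 ≤ re (inner 𝕜 (A x) x)) (x : E) :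
    c * ‖x‖ ^ 2 ≤ re (inner 𝕜 (A x) x) :=
  hs.induction h (isClosed_le (by fun_prop) (by fun_prop)) x

theorem ContinuousLinearMap.isUnit_of_mul_sq_le_re_inner [CompleteSpace E] (A : E →L[𝕜] E)
    {c : ℝ} (hc : 0 < c) (h : ∀ x, c * ‖x‖ ^ 2 ≤ re (inner 𝕜 (A x) x)) : IsUnit A :=
  isUnit_of_forall_le_norm_inner_map A (c := ⟨c, hc.le⟩) hc fun x =>
    calc ‖x‖ ^ 2 * c = c * ‖x‖ ^ 2 := mul_comm _ _
      _ ≤ re (inner 𝕜 (A x) x) := h x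
      _ ≤ ‖inner 𝕜 (A x) x‖ := re_le_norm _

end Coercive

theorem statement13_general {X : Type*}
    [NormedAddCommGroup X] [InnerProductSpace ℂ X] [CompleteSpace X]
    (D : X →ₗ.[ℂ] X) (hdense : Dense (D.domain : Set X))
    (hsurj : ∀ y : X, ∃ x : D.domain, D x = y)
    (M N : X →L[ℂ] X) (cd cm : ℝ) (hcd : 0 < cd) (hcm : 0 < cm)
    (hD : ∀ φ : D.domain, cd * ‖(φ : X)‖ ^ 2 ≤ (inner ℂ (D φ) ((φ : X)) : ℂ).re)
    (hM : ∀ φ : D.domain, cm * ‖(φ : X)‖ ^ 2 ≤ (inner ℂ (M (φ : X)) ((φ : X)) : ℂ).re)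
    (hN : ‖N‖ < cd * cm) :
    ∃ T Binv : X →L[ℂ] X,
      (∀ y : X, ∃ h : M (T y) ∈ D.domain, D ⟨M (T y), h⟩ = y) ∧
      (∀ (x : X) (h : M x ∈ D.domain), T (D ⟨M x, h⟩) = x) ∧
      (∀ y : X, ∃ h : M (Binv y) ∈ D.domain, D ⟨M (Binv y), h⟩ - N (Binv y) = y) ∧
      (∀ (x : X) (h : M x ∈ D.domain), Binv (D ⟨M x, h⟩ - N x) = x) ∧
      HasSum (fun k : ℕ => ((T.comp N) ^ k).comp T) Binv ∧
      ‖Binv‖ ≤ 1 / (cd * cm - ‖N‖) := by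
  have hMX := M.mul_sq_le_re_inner_of_dense hdense fun x hx => hM ⟨x, hx⟩
  obtain ⟨T, hT, hDMT, hTDM⟩ := D.exists_inverse_comp_of_surjective hsurj hcd hcm
    (fun φ => mul_norm_le_norm_of_mul_sq_le_re_inner (𝕜 := ℂ) (hD φ))
    (M.isUnit_of_mul_sq_le_re_inner hcm hMX)
    (fun x => mul_norm_le_norm_of_mul_sq_le_re_inner (hMX x))
  have hTN : ‖T * N‖ < 1 := (norm_mul_le T N).trans_lt (T.norm_mul_norm_lt_one hT hN)
  refine ⟨T, neumannInverse T N, hDMT, hTDM, fun y => ?_, fun x h => ?_,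
    hasSum_neumannInverse hTN, one_div (cd * cm - ‖N‖) ▸ norm_neumannInverse_le hT hN⟩
  · have hB := hDMT (y + N (neumannInverse T N y))
    rw [← neumannInverse_apply hTN y] at hB
    obtain ⟨h, hy⟩ := hB
    exact ⟨h, by rw [hy, add_sub_cancel_right]⟩
  · exact neumannInverse_apply_eq_of_apply_eq hTN (by rw [map_sub, hTDM])

/-- Let `D` be densely defined, closed, onto, `M, N ∈ L(X)`,
`Re⟨Dφ,φ⟩ ≥ c_d⟨φ,φ⟩` and `Re⟨Mφ,φ⟩ ≥ c_m⟨φ,φ⟩` on `dom D`, and `‖N‖ < c_d c_m`.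
Then `DM` is a bijection from `{x : Mx ∈ dom D}` onto `X` with bounded inverse `T`, and
`B = DM - N` is a bijection from the same domain onto `X` with bounded inverse given by
the norm-convergent series `B⁻¹ = Σ_k ((DM)⁻¹N)^k (DM)⁻¹` and
`‖B⁻¹‖ ≤ 1/(c_d c_m - ‖N‖)`. -/
theorem statement13 {X : Type*}
    [NormedAddCommGroup X] [InnerProductSpace ℂ X] [CompleteSpace X]
    (D : X →ₗ.[ℂ] X) (hdense : Dense (D.domain : Set X)) (hclosed : D.IsClosed)
    (hsurj : ∀ y : X, ∃ x : D.domain, D x = y)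
    (M N : X →L[ℂ] X) (cd cm : ℝ) (hcd : 0 < cd) (hcm : 0 < cm)
    (hD : ∀ φ : D.domain, cd * ‖(φ : X)‖ ^ 2 ≤ (inner ℂ (D φ) ((φ : X)) : ℂ).re)
    (hM : ∀ φ : D.domain, cm * ‖(φ : X)‖ ^ 2 ≤ (inner ℂ (M (φ : X)) ((φ : X)) : ℂ).re)
    (hN : ‖N‖ < cd * cm) :
    ∃ T Binv : X →L[ℂ] X,
      (∀ y : X, ∃ h : M (T y) ∈ D.domain, D ⟨M (T y), h⟩ = y) ∧
      (∀ (x : X) (h : M x ∈ D.domain), T (D ⟨M x, h⟩) = x) ∧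
      (∀ y : X, ∃ h : M (Binv y) ∈ D.domain, D ⟨M (Binv y), h⟩ - N (Binv y) = y) ∧
      (∀ (x : X) (h : M x ∈ D.domain), Binv (D ⟨M x, h⟩ - N x) = x) ∧
      HasSum (fun k : ℕ => ((T.comp N) ^ k).comp T) Binv ∧
      ‖Binv‖ ≤ 1 / (cd * cm - ‖N‖) :=
  statement13_general D hdense hsurj M N cd cm hcd hcm hD hM hN
end

section
/- Let X be a complex Hilbert space and let D : dom(D) ⊆ X → X be a densely defined, closed, linear operator which is a bijection from dom(D) onto X with bounded inverse (i.e., 0 ∈ ρ(D)). Let I be an index type carrying a filter F ≠ ⊥ (modelling a directed net), let M, M' : I → L(X), N ∈ L(X), r > 0, and assume: (i) M_ι → N in the weak operator topology along F, i.e., for all x, y ∈ X, ⟨y, M_ι x⟩ → ⟨y, N x⟩ along F; (ii) ‖M'_ι‖ ≤ r for all ι; (iii) for every ι and every u ∈ dom(D): M_ι u ∈ dom(D) and M_ι(D u) = D(M_ι u) − M'_ι u. Then there exists N' ∈ L(X) with ‖N'‖ ≤ r such that M'_ι → N' in the weak operator topology along F, for every u ∈ dom(D) one has N u ∈ dom(D)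 and N(D u) = D(N u) − N' u, and moreover for every u ∈ dom(D), D(M_ι u) converges weakly to D(N u) along F (i.e., ⟨y, D(M_ι u)⟩ → ⟨y, D(N u)⟩ for all y ∈ X). -/
/-!
With `T = D⁻¹ ∈ L(X)`, the relation `M D ⊆ D M - M'` is equivalent to the bounded identity
`M T - T M = T M' T`. Hence `⟪T* y, M'_ι (T x)⟫ = ⟪y, M_ι (T x)⟫ - ⟪T* y, M_ι x⟫` converges for
all `x, y`. Both `T` and `T*` have dense range (`ran T = dom D`, and `T` is injective), and the
uniformly bounded `M'_ι` are equicontinuous, so `⟪y, M'_ι x⟫` converges for all `x, y`; the limit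
is a sesquilinear form bounded by `r`, i.e. an operator `N'` with `‖N'‖ ≤ r`. Passing to the limit
in the bounded identity gives `N T - T N = T N' T`, that is `N D ⊆ D N - N'`.
-/

open Filter Topology
open scoped InnerProductSpace ComplexConjugate

section Equicontinuity

variable {ι X α : Type*} [TopologicalSpace X] [UniformSpace α] {l : Filter ι} [l.NeBot]
  {F : ι → X → α} {s : Set X} {x : X}

theorem EquicontinuousAt.cauchy_map_of_mem_closure (hF : EquicontinuousAt F x)
    (hs : ∀ y ∈ s, Cauchy (l.map (F · y))) (hx : x ∈ closure s) : Cauchy (l.map (F · x)) := by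
  refine cauchy_map_iff'.2 fun U hU => ?_
  obtain ⟨V, hV, hVsymm, hVU⟩ := comp_comp_symm_mem_uniformity_sets hU
  obtain ⟨y, hFy, hys⟩ := mem_closure_iff_nhds.1 hx _ (hF V hV)
  refine mem_map.2 <| mem_of_superset (mem_map.1 (cauchy_map_iff'.1 (hs y hys) hV))
    fun ⟨i, j⟩ hij => hVU ⟨_, ⟨_, hFy i, hij⟩, SetRel.symm V (hFy j)⟩

theorem EquicontinuousAt.exists_tendsto_of_mem_closure [CompleteSpace α]
    (hF : EquicontinuousAt F x) (hs : ∀ y ∈ s, ∃ z, Tendsto (F · y) l (𝓝 z))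
    (hx : x ∈ closure s) : ∃ z, Tendsto (F · x) l (𝓝 z) :=
  CompleteSpace.complete <|
    hF.cauchy_map_of_mem_closure (fun y hy => (hs y hy).elim fun _ h => h.cauchy_map) hx

end Equicontinuity

theorem ContinuousLinearMap.exists_tendsto_apply_of_dense {ι 𝕜₁ 𝕜₂ E G : Type*}
    [NontriviallyNormedField 𝕜₁] [NontriviallyNormedField 𝕜₂] {σ : 𝕜₁ →+* 𝕜₂}
    [RingHomIsometric σ] [SeminormedAddCommGroup E] [NormedSpace 𝕜₁ E]
    [NormedAddCommGroup G] [NormedSpace 𝕜₂ G] [CompleteSpace G] {l : Filter ι} [l.NeBot]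
    {f : ι → E →SL[σ] G} {C : ℝ} (hf : ∀ i, ‖f i‖ ≤ C) {s : Set E} (hs : Dense s)
    (h : ∀ x ∈ s, ∃ z, Tendsto (f · x) l (𝓝 z)) (x : E) : ∃ z, Tendsto (f · x) l (𝓝 z) := by
  have hbdd : ∃ C, ∀ i, ‖f i‖ ≤ C := ⟨C, hf⟩
  have hequi : Equicontinuous ((↑) ∘ f) := ((NormedSpace.equicontinuous_TFAE f).out 5 1).1 hbdd
  exact (hequi x).exists_tendsto_of_mem_closure h (hs x)

namespace ContinuousLinearMap

variable {𝕜 E ι : Type*} [RCLike 𝕜] [NormedAddCommGroup E] [InnerProductSpace 𝕜 E]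
  {l : Filter ι} [l.NeBot] {T : ι → E →L[𝕜] E} {r : ℝ}

theorem exists_tendsto_inner_of_dense (hT : ∀ i, ‖T i‖ ≤ r) {s t : Set E} (hs : Dense s)
    (ht : Dense t) (h : ∀ x ∈ s, ∀ y ∈ t, ∃ z, Tendsto (fun i => ⟪y, T i x⟫_𝕜) l (𝓝 z))
    (x y : E) : ∃ z, Tendsto (fun i => ⟪y, T i x⟫_𝕜) l (𝓝 z) := by
  have on_s : ∀ x ∈ s, ∀ y, ∃ z, Tendsto (fun i => ⟪y, T i x⟫_𝕜) l (𝓝 z) := by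
    intro x hx
    refine exists_tendsto_apply_of_dense (f := fun i => (innerSL 𝕜).flip (T i x)) (C := r * ‖x‖)
      (fun i => ?_) ht (h x hx)
    refine (opNorm_le_bound _ (norm_nonneg _) fun y => ?_).trans ((T i).le_of_opNorm_le (hT i) x)
    simpa [mul_comm] using norm_inner_le_norm (𝕜 := 𝕜) y (T i x)
  refine exists_tendsto_apply_of_dense (f := fun i => (innerSL 𝕜 y).comp (T i)) (C := ‖y‖ * r)
    (fun i => ?_) hs (fun x hx => on_s x hx y) x
  exact (opNorm_comp_le _ _).trans (by rw [innerSL_apply_norm]; gcongr; exact hT i)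

theorem exists_forall_tendsto_inner [CompleteSpace E] (hT : ∀ i, ‖T i‖ ≤ r)
    (h : ∀ x y, ∃ z, Tendsto (fun i => ⟪y, T i x⟫_𝕜) l (𝓝 z)) :
    ∃ S : E →L[𝕜] E, ‖S‖ ≤ r ∧ ∀ x y, Tendsto (fun i => ⟪y, T i x⟫_𝕜) l (𝓝 ⟪y, S x⟫_𝕜) := by
  choose c hc using h
  obtain ⟨i₀⟩ := l.nonempty_of_neBot
  have hr : 0 ≤ r := (norm_nonneg _).trans (hT i₀)
  have add_left (x x' y : E) : c (x + x') y = c x y + c x' y :=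
    tendsto_nhds_unique (hc _ _) <| by
      simpa only [map_add, inner_add_right] using (hc x y).add (hc x' y)
  have smul_left (a : 𝕜) (x y : E) : c (a • x) y = a * c x y :=
    tendsto_nhds_unique (hc _ _) <| by
      simpa only [map_smul, inner_smul_right] using (hc x y).const_mul a
  have add_right (x y y' : E) : c x (y + y') = c x y + c x y' :=
    tendsto_nhds_unique (hc _ _) (by simpa only [inner_add_left] using (hc x y).add (hc x y'))
  have smul_right (a : 𝕜) (x y : E) : c x (a • y) = conj a * c x y :=
    tendsto_nhds_unique (hc _ _) (by simpa only [inner_smul_left] using (hc x y).const_mul _)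
  have bound (y x : E) : ‖c x y‖ ≤ r * ‖y‖ * ‖x‖ := by
    refine le_of_tendsto (hc x y).norm (Eventually.of_forall fun i => ?_)
    calc ‖⟪y, T i x⟫_𝕜‖ ≤ ‖y‖ * (r * ‖x‖) :=
          (norm_inner_le_norm _ _).trans (by gcongr; exact (T i).le_of_opNorm_le (hT i) x)
      _ = r * ‖y‖ * ‖x‖ := by ring
  let B : E →L⋆[𝕜] E →L[𝕜] 𝕜 :=
    (LinearMap.mk₂'ₛₗ (starRingEnd 𝕜) (RingHom.id 𝕜) (fun y x => c x y)
      (fun y y' x => add_right x y y') (fun a y x => smul_right a x y)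
      (fun y x x' => add_left x x' y) (fun a y x => smul_left a x y)).mkContinuous₂ r bound
  refine ⟨adjoint (InnerProductSpace.continuousLinearMapOfBilin B), ?_, fun x y => ?_⟩
  · rw [LinearIsometryEquiv.norm_map, InnerProductSpace.continuousLinearMapOfBilin]
    exact (InnerProductSpace.toDual 𝕜 E).symm.toLinearIsometry.norm_toContinuousLinearMap_comp
      |>.trans_le (LinearMap.mkContinuous₂_norm_le _ hr bound)
  · rw [adjoint_inner_right, InnerProductSpace.continuousLinearMapOfBilin_apply]
    exact hc x y

theorem denseRange_adjoint_of_injective {F : Type*} [NormedAddCommGroup F]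
    [InnerProductSpace 𝕜 F] [CompleteSpace E] [CompleteSpace F] {A : E →L[𝕜] F}
    (hA : Function.Injective A) : DenseRange (adjoint A) := by
  have hclosure : (adjoint A).range.topologicalClosure = ⊤ := by
    rw [← orthogonal_ker, LinearMap.ker_eq_bot.2 hA, Submodule.bot_orthogonal_eq_top]
  rw [← Submodule.dense_iff_topologicalClosure_eq_top, LinearMap.coe_range] at hclosure
  exact hclosure

theorem exists_tendsto_inner_of_mul_sub_mul_eq [CompleteSpace E] {A : E →L[𝕜] E}
    (hA : DenseRange A) (hA_inj : Function.Injective A) {M M' : ι → E →L[𝕜] E} {N : E →L[𝕜] E}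
    (hM : ∀ x y, Tendsto (fun i => ⟪y, M i x⟫_𝕜) l (𝓝 ⟪y, N x⟫_𝕜)) (hM' : ∀ i, ‖M' i‖ ≤ r)
    (hcomm : ∀ i, M i * A - A * M i = A * M' i * A) :
    ∃ N' : E →L[𝕜] E, ‖N'‖ ≤ r ∧
      (∀ x y, Tendsto (fun i => ⟪y, M' i x⟫_𝕜) l (𝓝 ⟪y, N' x⟫_𝕜)) ∧
      N * A - A * N = A * N' * A := by
  have hM'_inner (i : ι) (x y : E) :
      ⟪adjoint A y, M' i (A x)⟫_𝕜 = ⟪y, M i (A x)⟫_𝕜 - ⟪adjoint A y, M i x⟫_𝕜 := by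
    rw [adjoint_inner_left, adjoint_inner_left, ← inner_sub_right]
    simpa using congrArg (fun S : E →L[𝕜] E => ⟪y, S x⟫_𝕜) (hcomm i).symm
  have hlim (x y : E) : Tendsto (fun i => ⟪adjoint A y, M' i (A x)⟫_𝕜) l
      (𝓝 (⟪y, N (A x)⟫_𝕜 - ⟪adjoint A y, N x⟫_𝕜)) := by
    simpa only [hM'_inner] using (hM (A x) y).sub (hM x (adjoint A y))
  obtain ⟨N', hN'r, hN'⟩ := exists_forall_tendsto_inner hM' <|
    exists_tendsto_inner_of_dense hM' hA (denseRange_adjoint_of_injective hA_inj) <| by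
      rintro _ ⟨x, rfl⟩ _ ⟨y, rfl⟩
      exact ⟨_, hlim x y⟩
  refine ⟨N', hN'r, hN', ext fun x => ext_inner_left 𝕜 fun y => ?_⟩
  have := tendsto_nhds_unique (hN' (A x) (adjoint A y)) (hlim x y)
  simp only [sub_apply, mul_apply_eq_comp, inner_sub_right]
  rw [← adjoint_inner_left A (N x), ← adjoint_inner_left A (N' (A x)), this]

end ContinuousLinearMap

section UnboundedOperators

variable {𝕜 E F : Type*} [NormedField 𝕜] [NormedAddCommGroup E] [NormedSpace 𝕜 E]
  [NormedAddCommGroup F] [NormedSpace 𝕜 F]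

theorem LinearPMap.exists_inverse_of_norm_le (D : E →ₗ.[𝕜] F)
    (hsurj : ∀ y : F, ∃ x : D.domain, D x = y) {C : ℝ}
    (hC : ∀ x : D.domain, ‖(x : E)‖ ≤ C * ‖D x‖) :
    ∃ T : F →L[𝕜] E, (∀ y, ∃ h : T y ∈ D.domain, D ⟨T y, h⟩ = y) ∧
      ∀ u : D.domain, T (D u) = u := by
  have hinj : Function.Injective D.toFun := by
    refine (injective_iff_map_eq_zero D.toFun).2 fun x hx => Subtype.ext ?_
    simpa [show D x = 0 from hx] using hC x
  let e := LinearEquiv.ofBijective D.toFun ⟨hinj, hsurj⟩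
  let T : F →L[𝕜] E := (D.domain.subtype ∘ₗ e.symm.toLinearMap).mkContinuous C fun y => by
    simpa [e, show D (e.symm y) = y from e.apply_symm_apply y] using hC (e.symm y)
  exact ⟨T, fun y => ⟨(e.symm y).2, e.apply_symm_apply y⟩,
    fun u => congrArg Subtype.val (e.symm_apply_apply u)⟩

/-- `A D ⊆ D A - B`: on `dom D`, `B` is the commutator `[D, A] = D A - A D`. -/
def LinearPMap.HasCommutator (D : E →ₗ.[𝕜] E) (A B : E →L[𝕜] E) : Prop :=
  ∀ u : D.domain, ∃ h : A u ∈ D.domain, A (D u) = D ⟨A u, h⟩ - B u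

theorem LinearPMap.hasCommutator_iff {D : E →ₗ.[𝕜] E} {T : E →L[𝕜] E}
    (hTD : ∀ y, ∃ h : T y ∈ D.domain, D ⟨T y, h⟩ = y) (hDT : ∀ u : D.domain, T (D u) = u)
    {A B : E →L[𝕜] E} : D.HasCommutator A B ↔ A * T - T * A = T * B * T := by
  constructor
  · intro hAB
    ext y
    obtain ⟨hy, hDy⟩ := hTD y
    obtain ⟨hATy, hcomm⟩ := hAB ⟨T y, hy⟩
    rw [hDy, eq_sub_iff_add_eq] at hcomm
    have hAT : A (T y) = T (A y + B (T y)) := by rw [hcomm, hDT]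
    simp only [_root_.sub_apply, mul_apply_eq_comp, hAT, _root_.map_add, add_sub_cancel_left]
  · intro hAT u
    have hAu : A u = T (A (D u) + B u) := by
      have := congrArg (· (D u)) hAT
      simp only [_root_.sub_apply, mul_apply_eq_comp, hDT, sub_eq_iff_eq_add] at this
      rw [this, _root_.map_add, add_comm]
    obtain ⟨hmem, hD⟩ := hTD (A (D u) + B u)
    refine ⟨hAu ▸ hmem, ?_⟩
    rw [show (⟨A u, hAu ▸ hmem⟩ : D.domain) = ⟨_, hmem⟩ from Subtype.ext hAu, hD,
      add_sub_cancel_right]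

end UnboundedOperators

theorem statement17_general {X : Type*}
    [NormedAddCommGroup X] [InnerProductSpace ℂ X] [CompleteSpace X]
    (D : X →ₗ.[ℂ] X) (hdense : Dense (D.domain : Set X))
    (hsurj : ∀ y : X, ∃ x : D.domain, D x = y)
    (hinv : ∃ C : ℝ, ∀ x : D.domain, ‖(x : X)‖ ≤ C * ‖D x‖)
    {I : Type*} (F : Filter I) [F.NeBot]
    (M M' : I → X →L[ℂ] X) (N : X →L[ℂ] X) (r : ℝ)
    (hMconv : ∀ x y : X,
      Tendsto (fun ι => (inner ℂ y (M ι x) : ℂ)) F (𝓝 (inner ℂ y (N x))))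
    (hM'bd : ∀ ι : I, ‖M' ι‖ ≤ r)
    (hcomm : ∀ (ι : I) (u : D.domain), ∃ h : M ι (u : X) ∈ D.domain,
      M ι (D u) = D ⟨M ι (u : X), h⟩ - M' ι (u : X)) :
    ∃ N' : X →L[ℂ] X, ‖N'‖ ≤ r ∧
      (∀ x y : X,
        Tendsto (fun ι => (inner ℂ y (M' ι x) : ℂ)) F (𝓝 (inner ℂ y (N' x)))) ∧
      (∀ u : D.domain, ∃ h : N (u : X) ∈ D.domain,
        N (D u) = D ⟨N (u : X), h⟩ - N' (u : X)) ∧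
      (∀ (u : D.domain) (y : X),
        Tendsto (fun ι => (inner ℂ y (M ι (D u) + M' ι (u : X)) : ℂ)) F
          (𝓝 (inner ℂ y (N (D u) + N' (u : X))))) := by
  obtain ⟨C, hC⟩ := hinv
  obtain ⟨T, hTD, hDT⟩ := D.exists_inverse_of_norm_le hsurj hC
  have hT_inj : Function.Injective T := fun y y' h => by
    obtain ⟨hy, hDy⟩ := hTD y
    obtain ⟨hy', hDy'⟩ := hTD y'
    rw [← hDy, ← hDy']
    exact congrArg D (Subtype.ext h)
  have hT_dense : DenseRange T := hdense.mono fun u hu => ⟨D ⟨u, hu⟩, hDT ⟨u, hu⟩⟩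
  obtain ⟨N', hN'r, hN', hN'comm⟩ :=
    ContinuousLinearMap.exists_tendsto_inner_of_mul_sub_mul_eq hT_dense hT_inj hMconv hM'bd
      fun ι => (D.hasCommutator_iff hTD hDT).1 (hcomm ι)
  refine ⟨N', hN'r, hN', (D.hasCommutator_iff hTD hDT).2 hN'comm, fun u y => ?_⟩
  simpa only [inner_add_right] using (hMconv (D u) y).add (hN' u y)

/-- Let `D` be a densely defined, closed linear operator in `X` which
is a bijection onto `X` with bounded inverse, and let `(M_ι)` be a net of bounded
operators converging to `N` in the weak operator topology such that the commutators
`M'_ι` with `M_ι D ⊆ D M_ι − M'_ι` are uniformly bounded by `r`.  Then the `M'_ι`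
converge in the weak operator topology to some `N'` with `‖N'‖ ≤ r`,
`N D ⊆ D N − N'`, and `D(M_ι u)` converges weakly to `D(N u)` for `u ∈ dom D`. -/
theorem statement17 {X : Type*}
    [NormedAddCommGroup X] [InnerProductSpace ℂ X] [CompleteSpace X]
    (D : X →ₗ.[ℂ] X) (hdense : Dense (D.domain : Set X)) (hclosed : D.IsClosed)
    (hsurj : ∀ y : X, ∃ x : D.domain, D x = y)
    (hinv : ∃ C : ℝ, ∀ x : D.domain, ‖(x : X)‖ ≤ C * ‖D x‖)
    {I : Type*} (F : Filter I) [F.NeBot]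
    (M M' : I → X →L[ℂ] X) (N : X →L[ℂ] X) (r : ℝ) (hr : 0 < r)
    (hMconv : ∀ x y : X,
      Tendsto (fun ι => (inner ℂ y (M ι x) : ℂ)) F (𝓝 (inner ℂ y (N x))))
    (hM'bd : ∀ ι : I, ‖M' ι‖ ≤ r)
    (hcomm : ∀ (ι : I) (u : D.domain), ∃ h : M ι (u : X) ∈ D.domain,
      M ι (D u) = D ⟨M ι (u : X), h⟩ - M' ι (u : X)) :
    ∃ N' : X →L[ℂ] X, ‖N'‖ ≤ r ∧
      (∀ x y : X,
        Tendsto (fun ι => (inner ℂ y (M' ι x) : ℂ)) F (𝓝 (inner ℂ y (N' x)))) ∧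
      (∀ u : D.domain, ∃ h : N (u : X) ∈ D.domain,
        N (D u) = D ⟨N (u : X), h⟩ - N' (u : X)) ∧
      (∀ (u : D.domain) (y : X),
        Tendsto (fun ι => (inner ℂ y (M ι (D u) + M' ι (u : X)) : ℂ)) F
          (𝓝 (inner ℂ y (N (D u) + N' (u : X))))) :=
  statement17_general D hdense hsurj hinv F M M' N r hMconv hM'bd hcomm
end

section
/- Let X, Y be complex Hilbert spaces and let S : dom(S) ⊆ X → Y be a densely defined, closed, linear operator. Assume that the embedding of dom(S), equipped with the graph norm ‖x‖_S = (‖x‖² + ‖Sx‖²)^{1/2}, into X is compact, i.e., every sequence (x_n) in dom(S) with sup_n (‖x_n‖ + ‖S x_n‖) < ∞ has a subsequence converging in X. Then the embedding of dom(S*) ∩ ker(S*)^⊥, equipped with the graph norm of S*, into Y is compact, i.e., every sequence (y_n) in dom(S*) with y_n orthogonal to ker(S*) for all n and sup_n (‖y_n‖ + ‖S* y_n‖) < ∞ has a subsequence converging in Y. -/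
/-!
Compactness of the embedding and closedness of `S` give a Poincaré-type estimate
`‖x‖ ≤ C ‖S x‖` on `dom S ∩ (ker S)ᗮ`: a normalized sequence there with `S xₙ → 0` would have a
limit of norm one in `ker S ∩ (ker S)ᗮ = 0`. Hence `S` has closed range, and the orthogonality
hypothesis puts `yₙ` in `(ran S)ᗮᗮ = ran S`, so `yₙ = S xₙ` with `xₙ ∈ (ker S)ᗮ` bounded.
A subsequence of `(xₙ)` converges, and
`‖y_a - y_b‖² = ⟪x_a - x_b, η_a - η_b⟫ ≤ 2 C ‖x_a - x_b‖` makes the corresponding `yₙ` Cauchy.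
-/

open Filter Topology

theorem cauchySeq_of_dist_le_of_tendsto {α β : Type*} [PseudoMetricSpace α] [PseudoMetricSpace β]
    {ι : Type*} [Nonempty ι] [SemilatticeSup ι] {u : ι → α} {v : ι → β} (hu : CauchySeq u)
    {f : ℝ → ℝ} (hf : Tendsto f (𝓝 0) (𝓝 0)) (h : ∀ a b, dist (v a) (v b) ≤ f (dist (u a) (u b))) :
    CauchySeq v := by
  rw [cauchySeq_iff_tendsto_dist_atTop_0] at hu ⊢
  exact squeeze_zero (fun _ => dist_nonneg) (fun p => h p.1 p.2) (hf.comp hu)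

namespace LinearPMap

section Normed

variable {𝕜 E F : Type*} [NormedField 𝕜] [NormedAddCommGroup E] [NormedSpace 𝕜 E]
  [NormedAddCommGroup F] [NormedSpace 𝕜 F] {S : E →ₗ.[𝕜] F}

def IsCompactDomainEmbedding (S : E →ₗ.[𝕜] F) : Prop :=
  ∀ x : ℕ → S.domain, (∃ C : ℝ, ∀ n, ‖(x n : E)‖ + ‖S (x n)‖ ≤ C) →
    ∃ g : ℕ → ℕ, StrictMono g ∧ ∃ l : E, Tendsto (fun n => (x (g n) : E)) atTop (𝓝 l)

def ker (S : E →ₗ.[𝕜] F) : Submodule 𝕜 E :=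
  S.graph.comap (LinearMap.inl 𝕜 E F)

theorem mem_ker {x : E} : x ∈ S.ker ↔ (x, 0) ∈ S.graph :=
  Iff.rfl

theorem IsClosed.isClosed_ker (hS : S.IsClosed) : _root_.IsClosed (S.ker : Set E) :=
  hS.preimage (continuous_id.prodMk continuous_const)

theorem IsClosed.mem_graph_of_tendsto (hS : S.IsClosed) {ι : Type*} {p : Filter ι} [p.NeBot]
    {x : ι → S.domain} {l : E} {m : F} (hl : Tendsto (fun n => (x n : E)) p (𝓝 l))
    (hm : Tendsto (fun n => S (x n)) p (𝓝 m)) : (l, m) ∈ S.graph :=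
  hS.mem_of_tendsto (hl.prodMk_nhds hm) (Eventually.of_forall fun n => S.mem_graph (x n))

theorem IsClosed.isClosed_image_of_norm_le_mul_norm [CompleteSpace E] (hS : S.IsClosed)
    {K : Submodule 𝕜 E} (hK : _root_.IsClosed (K : Set E)) {C : ℝ}
    (hC : ∀ x : S.domain, (x : E) ∈ K → ‖(x : E)‖ ≤ C * ‖S x‖) :
    _root_.IsClosed {y : F | ∃ x : S.domain, (x : E) ∈ K ∧ S x = y} := by
  refine IsSeqClosed.isClosed fun w y hw hy => ?_
  choose x hxK hxw using hw
  have hx : CauchySeq fun n => (x n : E) := by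
    refine cauchySeq_of_dist_le_of_tendsto hy.cauchySeq (f := (C * ·))
      (by simpa using (continuous_const_mul C).tendsto 0) fun a b => ?_
    rw [dist_eq_norm, dist_eq_norm, ← hxw a, ← hxw b, ← S.map_sub]
    exact hC (x a - x b) (sub_mem (hxK a) (hxK b))
  obtain ⟨l, hl⟩ := cauchySeq_tendsto_of_complete hx
  obtain ⟨v, hv, hSv⟩ := S.mem_graph_iff.1 (hS.mem_graph_of_tendsto hl (by simpa [hxw] using hy))
  exact ⟨v, hv ▸ hK.mem_of_tendsto hl (Eventually.of_forall hxK), hSv⟩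

end Normed

section InnerProduct

variable {𝕜 E F : Type*} [RCLike 𝕜] [NormedAddCommGroup E] [InnerProductSpace 𝕜 E]
  [NormedAddCommGroup F] [InnerProductSpace 𝕜 F] {S : E →ₗ.[𝕜] F}

theorem IsClosed.exists_pos_le_norm_apply_of_mem_orthogonal_ker (hS : S.IsClosed)
    (hcpt : S.IsCompactDomainEmbedding) :
    ∃ δ > 0, ∀ x : S.domain, (x : E) ∈ S.kerᗮ → ‖(x : E)‖ = 1 → δ ≤ ‖S x‖ := by
  by_contra! h
  choose x hxK hx1 hSx using fun n : ℕ => h (1 / (n + 1)) Nat.one_div_pos_of_nat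
  obtain ⟨g, hg, l, hl⟩ := hcpt x ⟨2, fun n => by
    have : (1 : ℝ) / (n + 1) ≤ 1 := (div_le_one (by positivity)).2 (by simp)
    linarith [hx1 n, hSx n]⟩
  have hSx0 : Tendsto (fun n => S (x (g n))) atTop (𝓝 0) :=
    squeeze_zero_norm (fun n => (hSx (g n)).le)
      (tendsto_one_div_add_atTop_nhds_zero_nat.comp hg.tendsto_atTop)
  have hl_ker : l ∈ S.ker := mem_ker.2 (hS.mem_graph_of_tendsto hl hSx0)
  have hl_orth : l ∈ S.kerᗮ :=
    S.ker.isClosed_orthogonal.mem_of_tendsto hl (Eventually.of_forall fun n => hxK (g n))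
  have hl_norm : ‖l‖ = 1 := tendsto_nhds_unique hl.norm (by simp [hx1])
  have hl0 : l = 0 := inner_self_eq_zero.1 (hl_orth l hl_ker)
  simp [hl0] at hl_norm

theorem IsClosed.exists_norm_le_mul_norm_apply_of_mem_orthogonal_ker (hS : S.IsClosed)
    (hcpt : S.IsCompactDomainEmbedding) :
    ∃ C ≥ 0, ∀ x : S.domain, (x : E) ∈ S.kerᗮ → ‖(x : E)‖ ≤ C * ‖S x‖ := by
  obtain ⟨δ, hδ, h⟩ := hS.exists_pos_le_norm_apply_of_mem_orthogonal_ker hcpt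
  refine ⟨δ⁻¹, by positivity, fun x hx => ?_⟩
  rcases eq_or_ne (x : E) 0 with hx0 | hx0
  · rw [hx0, norm_zero]
    positivity
  have hunit := h ((‖(x : E)‖⁻¹ : 𝕜) • x) (S.kerᗮ.smul_mem _ hx) (norm_smul_inv_norm hx0)
  rw [S.map_smul, norm_smul, norm_inv, RCLike.norm_ofReal, abs_norm] at hunit
  rw [le_inv_mul_iff₀ hδ, mul_comm]
  rwa [le_inv_mul_iff₀ (norm_pos_iff.2 hx0)] at hunit

theorem exists_mem_orthogonal_ker_apply_eq [S.ker.HasOrthogonalProjection] (v : S.domain) :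
    ∃ x : S.domain, (x : E) ∈ S.kerᗮ ∧ S x = S v := by
  have hp : (S.ker.starProjection v, 0) ∈ S.graph := mem_ker.1 (S.ker.starProjection_apply_mem v)
  set p : S.domain := ⟨_, mem_domain_of_mem_graph hp⟩
  refine ⟨v - p, S.ker.sub_starProjection_mem_orthogonal _, ?_⟩
  rw [S.map_sub, ← (image_iff _).2 hp, sub_zero]

theorem IsClosed.exists_mem_orthogonal_ker_apply_eq_of_mem_closure [CompleteSpace E]
    (hS : S.IsClosed) {C : ℝ} (hC : ∀ x : S.domain, (x : E) ∈ S.kerᗮ → ‖(x : E)‖ ≤ C * ‖S x‖)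
    {y : F} (hy : y ∈ _root_.closure (Set.range S)) :
    ∃ x : S.domain, (x : E) ∈ S.kerᗮ ∧ S x = y := by
  have : CompleteSpace S.ker := hS.isClosed_ker.completeSpace_coe
  refine closure_minimal ?_ (hS.isClosed_image_of_norm_le_mul_norm S.ker.isClosed_orthogonal hC) hy
  rintro _ ⟨v, rfl⟩
  exact exists_mem_orthogonal_ker_apply_eq v

theorem mem_closure_range_of_inner_eq_zero [CompleteSpace F] {y : F}
    (hy : ∀ z : F, (∀ φ : S.domain, inner 𝕜 (S φ) z = 0) → inner 𝕜 y z = 0) :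
    y ∈ _root_.closure (Set.range S) := by
  have hy' : y ∈ (LinearMap.range S.toFun)ᗮᗮ := fun z hz => by
    rw [inner_eq_zero_symm]
    exact hy z fun φ => hz _ (LinearMap.mem_range_self _ φ)
  rwa [Submodule.orthogonal_orthogonal_eq_closure] at hy'

theorem norm_sq_le_of_inner_apply_eq {y : F} {η : E}
    (h : ∀ φ : S.domain, inner 𝕜 (S φ) y = inner 𝕜 (φ : E) η) {x : S.domain} (hx : S x = y) :
    ‖y‖ ^ 2 ≤ ‖(x : E)‖ * ‖η‖ :=
  calc ‖y‖ ^ 2 = RCLike.re (inner 𝕜 y y) := (inner_self_eq_norm_sq y).symm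
    _ = RCLike.re (inner 𝕜 (x : E) η) := by rw [← h x, hx]
    _ ≤ ‖inner 𝕜 (x : E) η‖ := RCLike.re_le_norm _
    _ ≤ ‖(x : E)‖ * ‖η‖ := norm_inner_le_norm _ _

end InnerProduct

end LinearPMap

theorem statement18_general {X Y : Type*}
    [NormedAddCommGroup X] [InnerProductSpace ℂ X] [CompleteSpace X]
    [NormedAddCommGroup Y] [InnerProductSpace ℂ Y] [CompleteSpace Y]
    (S : X →ₗ.[ℂ] Y) (hclosed : S.IsClosed)
    (hcpt : ∀ x : ℕ → S.domain, (∃ C : ℝ, ∀ n, ‖(x n : X)‖ + ‖S (x n)‖ ≤ C) →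
      ∃ g : ℕ → ℕ, StrictMono g ∧ ∃ l : X,
        Tendsto (fun n => ((x (g n) : X))) atTop (𝓝 l)) :
    ∀ (y : ℕ → Y) (η : ℕ → X),
      (∀ n, ∀ φ : S.domain, (inner ℂ (S φ) (y n) : ℂ) = inner ℂ ((φ : X)) (η n)) →
      (∀ n, ∀ z : Y, (∀ φ : S.domain, (inner ℂ (S φ) z : ℂ) = 0) →
        (inner ℂ (y n) z : ℂ) = 0) →
      (∃ C : ℝ, ∀ n, ‖y n‖ + ‖η n‖ ≤ C) →
      ∃ g : ℕ → ℕ, StrictMono g ∧ ∃ l : Y, Tendsto (fun n => y (g n)) atTop (𝓝 l) := by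
  intro y η hadj horth ⟨C, hC⟩
  obtain ⟨C₁, hC₁, hpoincare⟩ :=
    hclosed.exists_norm_le_mul_norm_apply_of_mem_orthogonal_ker hcpt
  choose x hx_orth hxy using fun n => hclosed.exists_mem_orthogonal_ker_apply_eq_of_mem_closure
    hpoincare (LinearPMap.mem_closure_range_of_inner_eq_zero (horth n))
  have hy_le n : ‖y n‖ ≤ C := by linarith [hC n, norm_nonneg (η n)]
  have hη_le n : ‖η n‖ ≤ C := by linarith [hC n, norm_nonneg (y n)]
  obtain ⟨g, hg, l, hl⟩ := hcpt x ⟨C₁ * C + C, fun n => by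
    have := hpoincare _ (hx_orth n)
    rw [hxy] at this ⊢
    linarith [hy_le n, mul_le_mul_of_nonneg_left (hy_le n) hC₁]⟩
  have hy_sq a b : dist (y a) (y b) ^ 2 ≤ 2 * C * dist (x a : X) (x b) := by
    have hadj_sub φ : inner ℂ (S φ) (y a - y b) = inner ℂ (φ : X) (η a - η b) := by
      rw [inner_sub_right, inner_sub_right, hadj, hadj]
    calc dist (y a) (y b) ^ 2 ≤ ‖(x a : X) - x b‖ * ‖η a - η b‖ := by
          rw [dist_eq_norm]
          exact LinearPMap.norm_sq_le_of_inner_apply_eq hadj_sub (x := x a - x b)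
            (by rw [S.map_sub, hxy, hxy])
      _ ≤ ‖(x a : X) - x b‖ * (2 * C) := by
          gcongr
          linarith [norm_sub_le (η a) (η b), hη_le a, hη_le b]
      _ = 2 * C * dist (x a : X) (x b) := by rw [dist_eq_norm, mul_comm]
  refine ⟨g, hg, cauchySeq_tendsto_of_complete <| cauchySeq_of_dist_le_of_tendsto hl.cauchySeq
    (f := fun t => √(2 * C * t)) ?_ fun a b => Real.le_sqrt_of_sq_le (hy_sq (g a) (g b))⟩
  simpa using ((continuous_const.mul continuous_id).sqrt.tendsto (0 : ℝ))

/-- Let `S : dom S ⊆ X → Y` be densely defined, closed and linear with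
compact embedding of `(dom S, graph norm)` into `X` (stated sequentially).  Then the
embedding of `dom(S*) ∩ ker(S*)^⊥` (with graph norm of `S*`, the adjoint being described
via its defining property) into `Y` is compact: every graph-norm bounded sequence
`(y_n)` in `dom(S*)` orthogonal to `ker(S*)` has a subsequence converging in `Y`. -/
theorem statement18 {X Y : Type*}
    [NormedAddCommGroup X] [InnerProductSpace ℂ X] [CompleteSpace X]
    [NormedAddCommGroup Y] [InnerProductSpace ℂ Y] [CompleteSpace Y]
    (S : X →ₗ.[ℂ] Y) (hdense : Dense (S.domain : Set X)) (hclosed : S.IsClosed)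
    (hcpt : ∀ x : ℕ → S.domain, (∃ C : ℝ, ∀ n, ‖(x n : X)‖ + ‖S (x n)‖ ≤ C) →
      ∃ g : ℕ → ℕ, StrictMono g ∧ ∃ l : X,
        Tendsto (fun n => ((x (g n) : X))) atTop (𝓝 l)) :
    ∀ (y : ℕ → Y) (η : ℕ → X),
      (∀ n, ∀ φ : S.domain, (inner ℂ (S φ) (y n) : ℂ) = inner ℂ ((φ : X)) (η n)) →
      (∀ n, ∀ z : Y, (∀ φ : S.domain, (inner ℂ (S φ) z : ℂ) = 0) →
        (inner ℂ (y n) z : ℂ) = 0) →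
      (∃ C : ℝ, ∀ n, ‖y n‖ + ‖η n‖ ≤ C) →
      ∃ g : ℕ → ℕ, StrictMono g ∧ ∃ l : Y, Tendsto (fun n => y (g n)) atTop (𝓝 l) :=
  statement18_general S hclosed hcpt
end
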